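/- arXiv:1705.00642 — 6 statements merged into one kernel-verified Lean document; each statement's English description precedes it below -/
import Mathlib

section
/- Let V be a Hausdorff locally convex topological real vector space, let K ⊆ V be a nonempty compact convex set, and let Φ : K → (−∞, ∞] be convex and lower semicontinuous. Then sup_{x ∈ K} Φ(x) = sup_{x ∈ 𝓔(K)} Φ(x), where 𝓔(K) is the set of extreme points of K. -/
/-!
By Krein–Milman, `K` is the closed convex hull of its extreme points. For any level `c`, the
sublevel set `{x ∈ K | Φ x ≤ c}` is closed (lower semicontinuity on the compact set `K`) and
convex (convexity of `Φ`); if it contains the extreme points of `K`, it is therefore all of `K`.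
Taking `c` to be the supremum of `Φ` over the extreme points gives the nontrivial inequality.
-/

open scoped ENNReal

/-- Extreme points of a set, in the midpoint sense. -/
def midExtremePoints {V : Type*} [AddCommGroup V] [Module ℝ V] (S : Set V) : Set V :=
  {x | x ∈ S ∧ ∀ u ∈ S, ∀ v ∈ S, x = (2⁻¹ : ℝ) • (u + v) → u = x ∧ v = x}

section

variable {V : Type*} [AddCommGroup V] [Module ℝ V]

lemma extremePoints_subset_midExtremePoints (S : Set V) :
    S.extremePoints ℝ ⊆ midExtremePoints S := by
  rintro x ⟨hxS, h⟩
  refine ⟨hxS, fun u hu v hv hx => ?_⟩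
  refine ⟨h hu hv ⟨2⁻¹, 2⁻¹, by norm_num, by norm_num, by norm_num, ?_⟩,
    h hv hu ⟨2⁻¹, 2⁻¹, by norm_num, by norm_num, by norm_num, ?_⟩⟩
  · rw [← smul_add]; exact hx.symm
  · rw [← smul_add, add_comm]; exact hx.symm

lemma midExtremePoints_subset (S : Set V) : midExtremePoints S ⊆ S :=
  fun _ hx => hx.1

lemma convex_inter_preimage_Iic_of_ereal {K : Set V} (hK : Convex ℝ K) {Φ : V → EReal}
    (hΦ : ∀ x ∈ K, ∀ y ∈ K, ∀ a b : ℝ, 0 ≤ a → 0 ≤ b → a + b = 1 →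
      Φ (a • x + b • y) ≤ (a : EReal) * Φ x + (b : EReal) * Φ y)
    (c : EReal) : Convex ℝ (K ∩ Φ ⁻¹' Set.Iic c) := by
  rintro x ⟨hxK, hxc⟩ y ⟨hyK, hyc⟩ a b ha hb hab
  refine ⟨hK hxK hyK ha hb hab, ?_⟩
  have ha' : (0 : EReal) ≤ a := EReal.coe_nonneg.2 ha
  have hb' : (0 : EReal) ≤ b := EReal.coe_nonneg.2 hb
  calc Φ (a • x + b • y) ≤ (a : EReal) * Φ x + (b : EReal) * Φ y :=
        hΦ x hxK y hyK a b ha hb hab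
    _ ≤ (a : EReal) * c + (b : EReal) * c :=
      add_le_add (mul_le_mul_of_nonneg_left hxc ha') (mul_le_mul_of_nonneg_left hyc hb')
    _ = c := by
      rw [← EReal.right_distrib_of_nonneg ha' hb', ← EReal.coe_add, hab, EReal.coe_one, one_mul]

theorem IsCompact.subset_of_extremePoints_subset [TopologicalSpace V] [IsTopologicalAddGroup V]
    [ContinuousSMul ℝ V] [T2Space V] [LocallyConvexSpace ℝ V] {K C : Set V}
    (hKcpt : IsCompact K) (hKconv : Convex ℝ K) (hCclosed : IsClosed C) (hCconv : Convex ℝ C)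
    (hKC : K.extremePoints ℝ ⊆ C) : K ⊆ C := by
  rw [← closure_convexHull_extremePoints hKcpt hKconv]
  exact closure_minimal (convexHull_min hKC hCconv) hCclosed

end

theorem stmt6_general {V : Type*} [AddCommGroup V] [Module ℝ V] [TopologicalSpace V]
    [IsTopologicalAddGroup V] [ContinuousSMul ℝ V] [T2Space V] [LocallyConvexSpace ℝ V]
    (K : Set V) (hKcpt : IsCompact K) (hKconv : Convex ℝ K)
    (Φ : V → EReal)
    (hconv : ∀ x ∈ K, ∀ y ∈ K, ∀ a b : ℝ, 0 ≤ a → 0 ≤ b → a + b = 1 →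
      Φ (a • x + b • y) ≤ (a : EReal) * Φ x + (b : EReal) * Φ y)
    (hlsc : LowerSemicontinuousOn Φ K) :
    (⨆ x ∈ K, Φ x) = ⨆ x ∈ midExtremePoints K, Φ x := by
  set M := ⨆ x ∈ midExtremePoints K, Φ x
  refine le_antisymm (iSup₂_le fun x hx => ?_) (biSup_mono (midExtremePoints_subset K))
  have hK_sub : K ⊆ K ∩ Φ ⁻¹' Set.Iic M :=
    hKcpt.subset_of_extremePoints_subset hKconv
      (hlsc.isCompact_inter_preimage_Iic hKcpt M).isClosed
      (convex_inter_preimage_Iic_of_ereal hKconv hconv M)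
      fun e he => ⟨he.1, le_biSup Φ (extremePoints_subset_midExtremePoints K he)⟩
  exact (hK_sub hx).2

/-- for a convex lower semicontinuous function on a nonempty compact convex
subset of a Hausdorff locally convex space, the supremum over the set equals the supremum
over its extreme points. -/
theorem stmt6 {V : Type*} [AddCommGroup V] [Module ℝ V] [TopologicalSpace V]
    [IsTopologicalAddGroup V] [ContinuousSMul ℝ V] [T2Space V] [LocallyConvexSpace ℝ V]
    (K : Set V) (hKne : K.Nonempty) (hKcpt : IsCompact K) (hKconv : Convex ℝ K)
    (Φ : V → EReal)
    (hconv : ∀ x ∈ K, ∀ y ∈ K, ∀ a b : ℝ, 0 ≤ a → 0 ≤ b → a + b = 1 →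
      Φ (a • x + b • y) ≤ (a : EReal) * Φ x + (b : EReal) * Φ y)
    (hbot : ∀ x ∈ K, Φ x ≠ ⊥)
    (hlsc : LowerSemicontinuousOn Φ K) :
    (⨆ x ∈ K, Φ x) = ⨆ x ∈ midExtremePoints K, Φ x :=
  stmt6_general K hKcpt hKconv Φ hconv hlsc
end

section
/- Let E be a Polish space equipped with a regular σ-finite Borel measure α. Then the map M : 𝒫(E) → [0,∞] defined by M(μ) = sup{μ(A)/α(A) : A Borel with α(A) > 0} is lower semicontinuous with respect to the weak-* topology: if μ_β → μ weakly then M(μ) ≤ liminf_β M(μ_β). -/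
/-! The supremum defining `M` may be restricted to open sets, because outer regularity writes
`α(A)⁻¹` as the supremum of `α(U)⁻¹` over open `U ⊇ A`, and `μ(A) ≤ μ(U)`. Each
`μ ↦ μ(U) / α(U)` with `U` open is lower semicontinuous by the portmanteau theorem, and a
supremum of lower semicontinuous functions is lower semicontinuous. -/

open MeasureTheory
open scoped ENNReal

noncomputable def Mmax {E : Type*} [MeasurableSpace E] (α μ : Measure E) : ℝ≥0∞ :=
  ⨆ (A : Set E) (_ : MeasurableSet A) (_ : 0 < α A), μ A / α A

theorem Mmax_eq_iSup_isOpen {E : Type*} [MeasurableSpace E] [TopologicalSpace E]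
    [OpensMeasurableSpace E] (α μ : Measure E) [α.OuterRegular] :
    Mmax α μ = ⨆ (U : Set E) (_ : IsOpen U) (_ : 0 < α U), μ U / α U := by
  refine le_antisymm (iSup₂_le fun A _ => iSup_le fun hαA => ?_) <|
    iSup₂_le fun U hU => iSup_le fun hαU =>
      le_iSup₂_of_le U hU.measurableSet <| le_iSup (fun _ => μ U / α U) hαU
  rw [ENNReal.div_eq_inv_mul, A.measure_eq_iInf_isOpen α]
  simp only [ENNReal.inv_iInf, ENNReal.iSup_mul]
  refine iSup₂_le fun U hAU => iSup_le fun hU => ?_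
  have hαU : 0 < α U := hαA.trans_le (measure_mono hAU)
  calc (α U)⁻¹ * μ A ≤ (α U)⁻¹ * μ U := mul_le_mul_right (measure_mono hAU) _
    _ = μ U / α U := (ENNReal.div_eq_inv_mul).symm
    _ ≤ _ := le_iSup₂_of_le U hU <| le_iSup (fun _ => μ U / α U) hαU

theorem ProbabilityMeasure.lowerSemicontinuous_apply_of_isOpen {Ω : Type*} [MeasurableSpace Ω]
    [TopologicalSpace Ω] [OpensMeasurableSpace Ω] [HasOuterApproxClosed Ω] {U : Set Ω}
    (hU : IsOpen U) : LowerSemicontinuous fun μ : ProbabilityMeasure Ω => (μ : Measure Ω) U :=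
  lowerSemicontinuous_iff_le_liminf.mpr fun _ =>
    ProbabilityMeasure.le_liminf_measure_open_of_tendsto Filter.tendsto_id hU

theorem stmt7_general {E : Type*} [MeasurableSpace E] [TopologicalSpace E] [PolishSpace E]
    [BorelSpace E] (α : Measure E) [α.OuterRegular] :
    LowerSemicontinuous (fun μ : ProbabilityMeasure E => Mmax α μ.toMeasure) := by
  simp only [Mmax_eq_iSup_isOpen]
  refine lowerSemicontinuous_iSup fun U => lowerSemicontinuous_iSup fun hU =>
    lowerSemicontinuous_iSup fun hαU => ?_
  exact (ENNReal.continuous_div_const (α U) hαU.ne').comp_lowerSemicontinuous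
    (ProbabilityMeasure.lowerSemicontinuous_apply_of_isOpen hU)
    fun _ _ h => ENNReal.div_le_div_right h _

/-- the maximal function `M` is lower semicontinuous on the space of Borel
probability measures with the topology of weak convergence. -/
theorem stmt7 {E : Type*} [MeasurableSpace E] [TopologicalSpace E] [PolishSpace E]
    [BorelSpace E] (α : Measure E) [SigmaFinite α] [α.InnerRegular] [α.OuterRegular] :
    LowerSemicontinuous (fun μ : ProbabilityMeasure E => Mmax α μ.toMeasure) :=
  stmt7_general α
end

section
/- Let T : ℝ^n → ℝ^k be a surjective linear map (1 ≤ k < n), and let A : ℝ^{n−k} → ℝ^n be a linear map whose columns form an orthonormal basis of ker(T). Let f : (ℝ^d)^n → [0,∞) be Lebesgue-integrable with ∫ f = 1. Then the pushforward under T^(d) of the measure f·λ_{nd} (λ_{nd} = Lebesgue measure on (ℝ^d)^n) is absolutely continuous with respect to Lebesgue measure on (ℝ^d)^k, with density g given by g(x) = det(T T^t)^{−d/2} ∫_{(ℝ^d)^{n−k}} f( (T^(d))^t (T^(d) (T^(d))^t)^{−1} x + A^(d) y ) dy. In particular g(0) = det(T T^t)^{−d/2} ∫_{(ℝ^d)^{n−k}}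 f(A^(d) y) dy. -/
/-!
Put `T⁺ = Tᵀ (T Tᵀ)⁻¹` and `Φ(x, y) = T⁺^(d) x + A^(d) y`. Since `T T⁺ = 1` and `T A = 0`,
`T^(d) ∘ Φ` is the first projection, and the Gram matrix of the columns of `[T⁺ | A]` is
`diag((T Tᵀ)⁻¹, 1)`, so `|det Φ| = det(T Tᵀ)^(-d/2)` and Lebesgue measure is
`det(T Tᵀ)^(-d/2)` times its image under `Φ`. Pushing `f · λ` forward along `T^(d)` therefore
amounts to integrating `f ∘ Φ` over the second factor.
-/

open MeasureTheory Matrix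
open scoped ENNReal NNReal Kronecker

namespace Matrix

variable {l m n R E : Type*}

section Semiring

variable [CommSemiring R] [AddCommMonoid E] [Module R E]

variable (E) in
/-- `M ⊗ id_E` acting on `E`-valued vectors; for `E = ℝ^d` this is the paper's `M^(d)`. -/
def piMulVec [Fintype n] (M : Matrix m n R) : (n → E) →ₗ[R] (m → E) where
  toFun v i := ∑ j, M i j • v j
  map_add' u v := by ext i; simp [smul_add, Finset.sum_add_distrib]
  map_smul' c v := by ext i; simp [Finset.smul_sum, smul_comm c]

@[simp] lemma piMulVec_apply [Fintype n] (M : Matrix m n R) (v : n → E) (i : m) :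
    M.piMulVec E v i = ∑ j, M i j • v j := rfl

lemma piMulVec_piMulVec [Fintype n] [Fintype l] (M : Matrix m n R) (N : Matrix n l R)
    (v : l → E) : M.piMulVec E (N.piMulVec E v) = (M * N).piMulVec E v := by
  ext i
  simp only [piMulVec_apply, Finset.smul_sum, mul_apply, Finset.sum_smul, smul_smul]
  exact Finset.sum_comm

@[simp] lemma piMulVec_one [Fintype m] [DecidableEq m] (v : m → E) :
    (1 : Matrix m m R).piMulVec E v = v := by
  ext i; simp [one_apply, ite_smul]

@[simp] lemma piMulVec_zero [Fintype n] (v : n → E) : (0 : Matrix m n R).piMulVec E v = 0 := by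
  ext i; simp

end Semiring

lemma det_piMulVec [CommRing R] [Nontrivial R] [AddCommGroup E] [Module R E] [Module.Free R E]
    [Module.Finite R E] [Fintype n] [DecidableEq n] (N : Matrix n n R) :
    LinearMap.det (N.piMulVec E) = N.det ^ Module.finrank R E := by
  set b := Module.finBasis R E
  set bb := Pi.basis fun _ : n => b
  rw [← LinearMap.det_toMatrix bb]
  have hmat : LinearMap.toMatrix bb bb (N.piMulVec E)
      = (N ⊗ₖ (1 : Matrix (Fin (Module.finrank R E)) (Fin (Module.finrank R E)) R)).submatrix
          (Equiv.sigmaEquivProd _ _) (Equiv.sigmaEquivProd _ _) := by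
    ext ⟨i, a⟩ ⟨j, c⟩
    rw [LinearMap.toMatrix_apply, Pi.basis_apply, Pi.basis_repr]
    simp [Pi.single_apply, Finsupp.single_apply, one_apply, eq_comm]
  rw [hmat, det_submatrix_equiv_self, det_kronecker]
  simp

theorem mul_eq_zero_of_range_le_ker [CommRing R] [Fintype n] [Fintype l] [DecidableEq l]
    {T : Matrix m n R} {A : Matrix n l R}
    (h : LinearMap.range A.mulVecLin ≤ LinearMap.ker T.mulVecLin) : T * A = 0 := by
  rw [LinearMap.range_le_ker_iff, ← mulVecLin_mul] at h
  exact toLin'.injective (by rw [map_zero, toLin'_apply', h])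

section Real

variable [Fintype l] [Fintype m] [Fintype n] [DecidableEq m]

theorem posDef_mul_transpose_of_surjective {T : Matrix m n ℝ}
    (hT : Function.Surjective T.mulVec) : (T * Tᵀ).PosDef := by
  obtain ⟨B, hTB⟩ := mulVec_surjective_iff_exists_right_inverse.mp hT
  have hinj : Function.Injective T.vecMul := fun x y hxy => by
    simpa [vecMul_vecMul, hTB] using congrArg (· ᵥ* B) hxy
  simpa using PosDef.mul_conjTranspose_self T hinj

theorem det_fromCols_pinv_transpose_mul_self [DecidableEq l] {T : Matrix m n ℝ}
    (hT : IsUnit (T * Tᵀ).det) {A : Matrix n l ℝ} (hTA : T * A = 0) (hA : Aᵀ * A = 1) :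
    ((fromCols (Tᵀ * (T * Tᵀ)⁻¹) A)ᵀ * fromCols (Tᵀ * (T * Tᵀ)⁻¹) A).det = (T * Tᵀ).det⁻¹ := by
  have hsymm : ((T * Tᵀ)⁻¹)ᵀ = (T * Tᵀ)⁻¹ := by
    rw [transpose_nonsing_inv, transpose_mul, transpose_transpose]
  have hAP : Aᵀ * (Tᵀ * (T * Tᵀ)⁻¹) = 0 := by
    rw [← Matrix.mul_assoc, ← transpose_mul, hTA, transpose_zero, Matrix.zero_mul]
  have hPP : (Tᵀ * (T * Tᵀ)⁻¹)ᵀ * (Tᵀ * (T * Tᵀ)⁻¹) = (T * Tᵀ)⁻¹ := by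
    rw [transpose_mul, hsymm, transpose_transpose, Matrix.mul_assoc, ← Matrix.mul_assoc T,
      mul_nonsing_inv _ hT, Matrix.mul_one]
  rw [transpose_fromCols, fromRows_mul_fromCols, hAP, hPP, hA, det_fromBlocks_zero₂₁, det_one,
    mul_one, det_nonsing_inv, Ring.inverse_eq_inv']

end Real

section Lebesgue

variable {ι κ κ' : Type*} [Fintype ι] [Fintype κ] [Fintype κ'] [DecidableEq κ]
  [NormedAddCommGroup E] [NormedSpace ℝ E] [FiniteDimensional ℝ E] [MeasureSpace E]
  [BorelSpace E] [(volume : Measure E).IsAddHaarMeasure]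

theorem map_piMulVec_volume (e : κ ≃ ι) (M : Matrix ι κ ℝ) (hM : (Mᵀ * M).det ≠ 0) :
    (volume : Measure (κ → E)).map (M.piMulVec E)
      = ENNReal.ofReal ((Mᵀ * M).det ^ (-(Module.finrank ℝ E : ℝ) / 2)) • volume := by
  classical
  set N := M.submatrix id e.symm
  have hsq : N.det ^ 2 = (Mᵀ * M).det := by
    have : Nᵀ * N = (Mᵀ * M).submatrix e.symm e.symm := by
      ext s t; simp [N, mul_apply, ← Equiv.sum_comp e]
    calc N.det ^ 2 = (Nᵀ * N).det := by rw [det_mul, det_transpose, sq]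
      _ = (Mᵀ * M).det := by rw [this, det_submatrix_equiv_self]
  have hN : N.det ≠ 0 := fun h => hM (by rw [← hsq, h, zero_pow two_ne_zero])
  have hcomp : M.piMulVec E = N.piMulVec E ∘ MeasurableEquiv.piCongrLeft (fun _ => E) e := by
    ext v i
    simp [N, ← Equiv.sum_comp e, MeasurableEquiv.piCongrLeft, Equiv.piCongrLeft]
  rw [hcomp, ← Measure.map_map (N.piMulVec E).continuous_of_finiteDimensional.measurable
      (MeasurableEquiv.measurable _),
    (volume_measurePreserving_piCongrLeft (fun _ => E) e).map_eq,
    Measure.map_linearMap_addHaar_eq_smul_addHaar _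
      (by rw [det_piMulVec]; exact pow_ne_zero _ hN), det_piMulVec]
  congr 2
  have hexp : ((2 : ℕ) : ℝ) * (-(Module.finrank ℝ E : ℝ) / 2) = -(Module.finrank ℝ E : ℝ) := by
    push_cast; ring
  rw [← hsq, ← sq_abs, ← Real.rpow_natCast |N.det| 2, ← Real.rpow_mul (abs_nonneg _), hexp,
    Real.rpow_neg (abs_nonneg _), Real.rpow_natCast, abs_inv, abs_pow]

theorem map_fromCols_piMulVec_volume [DecidableEq κ'] (e : κ ⊕ κ' ≃ ι) (P : Matrix ι κ ℝ)
    (A : Matrix ι κ' ℝ) (h : ((fromCols P A)ᵀ * fromCols P A).det ≠ 0) :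
    (volume : Measure ((κ → E) × (κ' → E))).map (fun p => P.piMulVec E p.1 + A.piMulVec E p.2)
      = ENNReal.ofReal (((fromCols P A)ᵀ * fromCols P A).det ^
          (-(Module.finrank ℝ E : ℝ) / 2)) • volume := by
  have hsplit : (fun p : (κ → E) × (κ' → E) => P.piMulVec E p.1 + A.piMulVec E p.2)
      = (fromCols P A).piMulVec E ∘ (MeasurableEquiv.sumPiEquivProdPi fun _ => E).symm := by
    ext p i
    simp [Fintype.sum_sum_type, MeasurableEquiv.sumPiEquivProdPi, Equiv.sumPiEquivProdPi]
  rw [hsplit, ← Measure.map_map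
      ((fromCols P A).piMulVec E).continuous_of_finiteDimensional.measurable
      (MeasurableEquiv.measurable _),
    (volume_measurePreserving_sumPiEquivProdPi_symm fun _ => E).map_eq,
    map_piMulVec_volume e _ h]

end Lebesgue

end Matrix

namespace MeasureTheory.Measure

variable {α β γ : Type*} [MeasurableSpace α] [MeasurableSpace β] [MeasurableSpace γ]

theorem withDensity_map_eq_map_withDensity_comp (μ : Measure α) {Φ : α → β} (hΦ : Measurable Φ)
    {f : β → ℝ≥0∞} (hf : Measurable f) :
    (μ.map Φ).withDensity f = (μ.withDensity (f ∘ Φ)).map Φ := by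
  ext s hs
  rw [withDensity_apply _ hs, Measure.map_apply hΦ hs, withDensity_apply _ (hΦ hs),
    setLIntegral_map hs hf hΦ]
  rfl

theorem map_fst_prod_withDensity (ν₁ : Measure β) (ν₂ : Measure γ) [SFinite ν₁] [SFinite ν₂]
    {h : β × γ → ℝ≥0∞} (hh : Measurable h) :
    ((ν₁.prod ν₂).withDensity h).map Prod.fst = ν₁.withDensity fun x => ∫⁻ y, h (x, y) ∂ν₂ := by
  ext s hs
  rw [Measure.map_apply measurable_fst hs, withDensity_apply _ (measurable_fst hs),
    withDensity_apply _ hs, ← Set.prod_univ, ← restrict_univ (μ := ν₂), ← prod_restrict, restrict_univ,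
    lintegral_prod _ hh.aemeasurable]

theorem map_withDensity_eq_withDensity_lintegral (ν₁ : Measure β) (ν₂ : Measure γ) [SFinite ν₁]
    [SFinite ν₂] {μ : Measure α} {Φ : β × γ → α} (hΦ : Measurable Φ) {c : ℝ≥0∞}
    (hμ : μ = c • (ν₁.prod ν₂).map Φ) {S : α → β} (hS : Measurable S) (hSΦ : ∀ p, S (Φ p) = p.1)
    {f : α → ℝ≥0∞} (hf : Measurable f) :
    (μ.withDensity f).map S = ν₁.withDensity fun x => c * ∫⁻ y, f (Φ (x, y)) ∂ν₂ := by
  have hSΦ' : S ∘ Φ = Prod.fst := funext hSΦ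
  rw [hμ, withDensity_smul_measure, withDensity_map_eq_map_withDensity_comp _ hΦ hf,
    Measure.map_smul, Measure.map_map hS hΦ, hSΦ', map_fst_prod_withDensity _ _ (hf.comp hΦ),
    ← withDensity_smul _ (hf.comp hΦ).lintegral_prod_right']
  rfl

end MeasureTheory.Measure

theorem stmt13_general (d n k : ℕ) (hkn : k < n)
    (T : Matrix (Fin k) (Fin n) ℝ) (hT : Function.Surjective fun v => T.mulVec v)
    (A : Matrix (Fin n) (Fin (n - k)) ℝ) (hA : Aᵀ * A = 1)
    (hker : LinearMap.range A.mulVecLin = LinearMap.ker T.mulVecLin)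
    (f : (Fin n → EuclideanSpace ℝ (Fin d)) → ℝ≥0)
    (hfm : Measurable f)
    (g : (Fin k → EuclideanSpace ℝ (Fin d)) → ℝ≥0∞)
    (hg : g = fun x => ENNReal.ofReal (((T * Tᵀ).det) ^ (-(d : ℝ) / 2)) *
      ∫⁻ y : Fin (n - k) → EuclideanSpace ℝ (Fin d),
        (f (fun j => (∑ i, (Tᵀ * (T * Tᵀ)⁻¹) j i • x i) + ∑ i, A j i • y i) : ℝ≥0∞)) :
    ((volume.withDensity (fun x => (f x : ℝ≥0∞))).map
        (fun x : Fin n → EuclideanSpace ℝ (Fin d) => fun i : Fin k => ∑ j, T i j • x j))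
      = volume.withDensity g
    ∧ g 0 = ENNReal.ofReal (((T * Tᵀ).det) ^ (-(d : ℝ) / 2)) *
        ∫⁻ y : Fin (n - k) → EuclideanSpace ℝ (Fin d),
          (f (fun j => ∑ i, A j i • y i) : ℝ≥0∞) := by
  refine ⟨?_, by simp [hg]⟩
  set P := Tᵀ * (T * Tᵀ)⁻¹
  have hTA : T * A = 0 := mul_eq_zero_of_range_le_ker hker.le
  have hr : 0 < (T * Tᵀ).det := (posDef_mul_transpose_of_surjective hT).det_pos
  have hTP : T * P = 1 := by rw [← Matrix.mul_assoc, mul_nonsing_inv _ hr.ne'.isUnit]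
  let E := EuclideanSpace ℝ (Fin d)
  let e : Fin k ⊕ Fin (n - k) ≃ Fin n := finSumFinEquiv.trans (finCongr (by omega))
  have hvol : (volume : Measure (Fin n → E)) = ENNReal.ofReal ((T * Tᵀ).det ^ (-(d : ℝ) / 2)) •
      (volume.prod volume).map fun p : (Fin k → E) × (Fin (n - k) → E) =>
        P.piMulVec E p.1 + A.piMulVec E p.2 := by
    have hgram := det_fromCols_pinv_transpose_mul_self hr.ne'.isUnit hTA hA
    rw [← Measure.volume_eq_prod, map_fromCols_piMulVec_volume e _ _ (by rw [hgram]; positivity),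
      hgram, finrank_euclideanSpace_fin, smul_smul,
      ← ENNReal.ofReal_mul (by positivity), Real.inv_rpow hr.le, ← Real.rpow_neg hr.le,
      ← Real.rpow_add hr, add_neg_cancel, Real.rpow_zero, ENNReal.ofReal_one, one_smul]
  have hTΦ (p : (Fin k → E) × (Fin (n - k) → E)) :
      T.piMulVec E (P.piMulVec E p.1 + A.piMulVec E p.2) = p.1 := by
    rw [map_add, piMulVec_piMulVec, piMulVec_piMulVec, hTP, hTA, piMulVec_one, piMulVec_zero,
      add_zero]
  rw [hg]
  exact Measure.map_withDensity_eq_withDensity_lintegral volume volume (by fun_prop) hvol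
    (T.piMulVec E).continuous_of_finiteDimensional.measurable hTΦ hfm.coe_nnreal_ennreal

/-- the density of the pushforward under `T^{(d)}` of a probability density `f`
on `(ℝ^d)^n`, computed via the Moore–Penrose pseudoinverse of `T^{(d)}` and an orthonormal
parametrization `A` of `ker T`; in particular its value at `0`. -/
theorem stmt13 (d n k : ℕ) (hd : 1 ≤ d) (hk1 : 1 ≤ k) (hkn : k < n)
    (T : Matrix (Fin k) (Fin n) ℝ) (hT : Function.Surjective fun v => T.mulVec v)
    (A : Matrix (Fin n) (Fin (n - k)) ℝ) (hA : Aᵀ * A = 1)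
    (hker : LinearMap.range A.mulVecLin = LinearMap.ker T.mulVecLin)
    (f : (Fin n → EuclideanSpace ℝ (Fin d)) → ℝ≥0)
    (hfm : Measurable f) (hf1 : ∫⁻ x, (f x : ℝ≥0∞) = 1)
    (g : (Fin k → EuclideanSpace ℝ (Fin d)) → ℝ≥0∞)
    (hg : g = fun x => ENNReal.ofReal (((T * Tᵀ).det) ^ (-(d : ℝ) / 2)) *
      ∫⁻ y : Fin (n - k) → EuclideanSpace ℝ (Fin d),
        (f (fun j => (∑ i, (Tᵀ * (T * Tᵀ)⁻¹) j i • x i) + ∑ i, A j i • y i) : ℝ≥0∞)) :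
    ((volume.withDensity (fun x => (f x : ℝ≥0∞))).map
        (fun x : Fin n → EuclideanSpace ℝ (Fin d) => fun i : Fin k => ∑ j, T i j • x j))
      = volume.withDensity g
    ∧ g 0 = ENNReal.ofReal (((T * Tᵀ).det) ^ (-(d : ℝ) / 2)) *
        ∫⁻ y : Fin (n - k) → EuclideanSpace ℝ (Fin d),
          (f (fun j => ∑ i, A j i • y i) : ℝ≥0∞) :=
  stmt13_general d n k hkn T hT A hA hker f hfm g hg
end

section
/- Let X_1, …, X_n be independent integer-valued random variables and l_1, …, l_n positive integers such that max_{j∈ℤ} P(X_i = j) ≤ 1/l_i for each i. Let Z_1, …, Z_n be independent with Z_i uniformly distributed on {0, 1, …, l_i − 1}. Then max_{j∈ℤ} P(X_1 + ⋯ + X_n = j) ≤ max_{j∈ℤ} P(Z_1 + ⋯ + Z_n = j). -/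
/-!
Write `pᵢ k = μᵢ {k}`, so that the law of the sum is the convolution `p₁ ⋆ ⋯ ⋆ pₙ`. If
`f ≤ 1/l` has total mass at most `1` and `Q` is summable, then
`∑ f Q ≤ (1/l) · max_{#K = l} ∑_{k ∈ K} Q k` (bathtub principle: the extremal `f` is uniform on
the `l` largest values of `Q`). Applying this to one factor at a time replaces each `pᵢ` by
`(1/lᵢ) 𝟙_{Kᵢ}` with `#Kᵢ = lᵢ`, so the maximal point mass of the sum is at most `∏ 1/lᵢ` times
the number of `x ∈ ∏ Kᵢ` with a prescribed sum. These `x` form an antichain for the coordinatewise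
order, and ranking each coordinate inside `Kᵢ` maps them injectively to an antichain of the box
`∏ [0, lᵢ - 1]`. By the de Bruijn–Tengbergen–Kruyswijk theorem, proved with a symmetric chain
decomposition of the box built from hooks in rectangles, such an antichain is no larger than the
middle layer, and the middle layer counts the ways the middle value is a sum of the `Zᵢ`.
-/

open MeasureTheory Finset
open scoped ENNReal

section Bathtub

variable {α : Type*} [Infinite α] {Q : α → ℝ≥0∞}

theorem exists_notMem_forall_le_of_tsum_ne_top (hQ : ∑' k, Q k ≠ ∞) (K : Finset α) :
    ∃ t ∉ K, ∀ s ∉ K, Q s ≤ Q t := by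
  classical
  by_cases h0 : ∃ t₁ ∉ K, Q t₁ ≠ 0
  swap
  · obtain ⟨t, ht⟩ := K.exists_notMem
    exact ⟨t, ht, fun s hs => by simp_all⟩
  obtain ⟨t₁, ht₁K, ht₁⟩ := h0
  have hfin : {s | Q t₁ ≤ Q s}.Finite := ENNReal.finite_const_le_of_tsum_ne_top hQ ht₁
  obtain ⟨t, ht, htmax⟩ :=
    (hfin.toFinset.filter (· ∉ K)).exists_max_image Q ⟨t₁, by simp [ht₁K]⟩
  refine ⟨t, (mem_filter.1 ht).2, fun s hs => ?_⟩
  rcases le_or_gt (Q t₁) (Q s) with h | h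
  · exact htmax s (by simp [h, hs])
  · exact h.le.trans (htmax t₁ (by simp [ht₁K]))

theorem exists_card_eq_forall_le_of_tsum_ne_top (hQ : ∑' k, Q k ≠ ∞) (l : ℕ) :
    ∃ K : Finset α, #K = l ∧ ∀ t ∉ K, ∀ k ∈ K, Q t ≤ Q k := by
  classical
  induction l with
  | zero => exact ⟨∅, rfl, by simp⟩
  | succ l ih =>
    obtain ⟨K, hK, hKtop⟩ := ih
    obtain ⟨t₀, ht₀, ht₀max⟩ := exists_notMem_forall_le_of_tsum_ne_top hQ K
    refine ⟨insert t₀ K, by rw [card_insert_of_notMem ht₀, hK], fun t ht k hk => ?_⟩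
    rw [mem_insert, not_or] at ht
    rcases mem_insert.1 hk with rfl | hk
    · exact ht₀max t ht.2
    · exact hKtop t ht.2 k hk

/-- With `K` the `l` largest values of `Q` and `c` the least of them,
`f Q ≤ f c + f (Q - c)` and `Q - c` vanishes off `K`. -/
theorem tsum_mul_le_inv_mul_iSup_sum {l : ℕ} (hl : 0 < l) {f : α → ℝ≥0∞}
    (hf : ∀ k, f k ≤ (l : ℝ≥0∞)⁻¹) (hf1 : ∑' k, f k ≤ 1) (hQ : ∑' k, Q k ≠ ∞) :
    ∑' k, f k * Q k ≤ (l : ℝ≥0∞)⁻¹ * ⨆ (K : Finset α) (_ : #K = l), ∑ k ∈ K, Q k := by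
  obtain ⟨K, hK, hKtop⟩ := exists_card_eq_forall_le_of_tsum_ne_top hQ l
  have hKne : K.Nonempty := card_pos.1 (hK ▸ hl)
  set c := K.inf' hKne Q
  have hc_le : ∀ k ∈ K, c ≤ Q k := fun k hk => inf'_le Q hk
  have hle_c : ∀ t ∉ K, Q t ≤ c := fun t ht => le_inf' hKne Q fun k hk => hKtop t ht k hk
  have hsum : ∑ k ∈ K, Q k = l * c + ∑ k ∈ K, (Q k - c) := by
    rw [← hK, ← nsmul_eq_mul, ← sum_const, ← sum_add_distrib]
    exact sum_congr rfl fun k hk => (add_tsub_cancel_of_le (hc_le k hk)).symm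
  calc ∑' k, f k * Q k
      ≤ ∑' k, (f k * c + f k * (Q k - c)) :=
        ENNReal.tsum_le_tsum fun k => by rw [← mul_add]; gcongr; exact le_add_tsub
    _ = (∑' k, f k) * c + ∑ k ∈ K, f k * (Q k - c) := by
        rw [ENNReal.tsum_add, ENNReal.tsum_mul_right, tsum_eq_sum (f := fun k => f k * (Q k - c))
          fun t ht => by rw [tsub_eq_zero_of_le (hle_c t ht), mul_zero]]
    _ ≤ 1 * c + ∑ k ∈ K, (l : ℝ≥0∞)⁻¹ * (Q k - c) := by
        gcongr with k
        exact hf k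
    _ = (l : ℝ≥0∞)⁻¹ * ∑ k ∈ K, Q k := by
        rw [hsum, mul_add, ← mul_assoc,
          ENNReal.inv_mul_cancel (Nat.cast_ne_zero.2 hl.ne') (ENNReal.natCast_ne_top l), mul_sum]
    _ ≤ (l : ℝ≥0∞)⁻¹ * ⨆ (K : Finset α) (_ : #K = l), ∑ k ∈ K, Q k := by
        gcongr
        exact le_iSup₂_of_le K hK le_rfl

end Bathtub

section Convolution

noncomputable def intConv (f g : ℤ → ℝ≥0∞) (j : ℤ) : ℝ≥0∞ := ∑' k, f k * g (j - k)

noncomputable def iterConv : {n : ℕ} → (Fin n → ℤ → ℝ≥0∞) → (ℤ → ℝ≥0∞) → ℤ → ℝ≥0∞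
  | 0, _, h => h
  | _ + 1, f, h => intConv (f 0) (iterConv (Fin.tail f) h)

/-- The point mass at `j` of a sum of independent `ℤ`-valued variables with point masses `f i`. -/
noncomputable def sumMass {ι : Type*} [Fintype ι] (f : ι → ℤ → ℝ≥0∞) (j : ℤ) : ℝ≥0∞ :=
  ∑' x : ι → ℤ, if ∑ i, x i = j then ∏ i, f i (x i) else 0

theorem tsum_intConv (f g : ℤ → ℝ≥0∞) :
    ∑' j, intConv f g j = (∑' k, f k) * ∑' k, g k := by
  simp only [intConv]
  rw [ENNReal.tsum_comm, ← ENNReal.tsum_mul_right]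
  refine tsum_congr fun k => ?_
  rw [ENNReal.tsum_mul_left]
  exact congrArg _ ((Equiv.subRight k).tsum_eq g)

theorem intConv_left_comm (f g h : ℤ → ℝ≥0∞) :
    intConv f (intConv g h) = intConv g (intConv f h) := by
  funext j
  simp only [intConv, ← ENNReal.tsum_mul_left]
  rw [ENNReal.tsum_comm]
  refine tsum_congr fun k => tsum_congr fun m => ?_
  rw [mul_left_comm, sub_right_comm]

theorem intConv_indicator_one (K : Finset ℤ) (g : ℤ → ℝ≥0∞) (j : ℤ) :
    intConv ((K : Set ℤ).indicator 1) g j = ∑ k ∈ K, g (j - k) := by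
  rw [intConv, sum_eq_tsum_indicator]
  refine tsum_congr fun k => ?_
  by_cases hk : k ∈ K <;> simp [hk]

theorem tsum_indicator_one {α : Type*} (K : Finset α) :
    ∑' k, (K : Set α).indicator (1 : α → ℝ≥0∞) k = #K := by
  rw [← sum_eq_tsum_indicator]
  simp

theorem tsum_iterConv {n : ℕ} (f : Fin n → ℤ → ℝ≥0∞) (h : ℤ → ℝ≥0∞) :
    ∑' j, iterConv f h j = (∏ i, ∑' k, f i k) * ∑' k, h k := by
  induction n with
  | zero => simp [iterConv]
  | succ n ih =>
    rw [iterConv, tsum_intConv, ih, Fin.prod_univ_succ, mul_assoc]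
    rfl

theorem iterConv_intConv {n : ℕ} (f : Fin n → ℤ → ℝ≥0∞) (g h : ℤ → ℝ≥0∞) :
    iterConv f (intConv g h) = intConv g (iterConv f h) := by
  induction n with
  | zero => rfl
  | succ n ih => rw [iterConv, iterConv, ih, intConv_left_comm]

theorem sumMass_fin_succ {n : ℕ} (f : Fin (n + 1) → ℤ → ℝ≥0∞) (j : ℤ) :
    sumMass f j = intConv (f 0) (sumMass (Fin.tail f)) j := by
  rw [sumMass, ← (Fin.consEquiv fun _ => ℤ).tsum_eq, ENNReal.tsum_prod', intConv]
  refine tsum_congr fun k => ?_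
  simp only [sumMass, Fin.consEquiv_apply, Fin.sum_cons, Fin.prod_univ_succ, Fin.cons_zero,
    Fin.cons_succ, ← ENNReal.tsum_mul_left, mul_ite, mul_zero, eq_sub_iff_add_eq']
  rfl

theorem iterConv_single_zero {n : ℕ} (f : Fin n → ℤ → ℝ≥0∞) :
    iterConv f (Pi.single 0 1) = sumMass f := by
  induction n with
  | zero =>
    funext j
    simp [iterConv, sumMass, Pi.single_apply, eq_comm]
  | succ n ih =>
    funext j
    rw [iterConv, ih, sumMass_fin_succ]

theorem sumMass_const_mul {ι : Type*} [Fintype ι] (c : ι → ℝ≥0∞) (f : ι → ℤ → ℝ≥0∞) (j : ℤ) :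
    sumMass (fun i k => c i * f i k) j = (∏ i, c i) * sumMass f j := by
  simp only [sumMass, prod_mul_distrib, ← ENNReal.tsum_mul_left, mul_ite, mul_zero]

theorem prod_indicator_one_apply {ι α : Type*} [Fintype ι] [DecidableEq ι] [DecidableEq α]
    (K : ι → Finset α) (x : ι → α) :
    ∏ i, (K i : Set α).indicator (1 : α → ℝ≥0∞) (x i) =
      if x ∈ Fintype.piFinset K then 1 else 0 := by
  by_cases hx : x ∈ Fintype.piFinset K
  · simp [hx, Fintype.mem_piFinset.1 hx]
  · obtain ⟨i, hi⟩ : ∃ i, x i ∉ K i := by simpa [Fintype.mem_piFinset] using hx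
    rw [if_neg hx]
    exact prod_eq_zero (mem_univ i) (by simp [hi])

theorem sumMass_indicator_one {ι : Type*} [Fintype ι] [DecidableEq ι] (K : ι → Finset ℤ)
    (j : ℤ) :
    sumMass (fun i => (K i : Set ℤ).indicator 1) j =
      #{x ∈ Fintype.piFinset K | ∑ i, x i = j} := by
  simp only [sumMass, prod_indicator_one_apply, ← ite_and]
  rw [tsum_eq_sum (s := Fintype.piFinset K) (fun x hx => by simp [hx]), sum_boole]
  congr 2
  exact filter_congr fun x hx => and_iff_left hx

/-- Peel the factors off one at a time with the bathtub bound; `h` accumulates the indicators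
already substituted. -/
theorem iSup_iterConv_le {n : ℕ} (l : Fin n → ℕ) (hl : ∀ i, 0 < l i) (f : Fin n → ℤ → ℝ≥0∞)
    (hf : ∀ i k, f i k ≤ (l i : ℝ≥0∞)⁻¹) (hf1 : ∀ i, ∑' k, f i k ≤ 1)
    (h : ℤ → ℝ≥0∞) (hh : ∑' k, h k ≠ ∞) :
    ⨆ j, iterConv f h j ≤ (∏ i, (l i : ℝ≥0∞)⁻¹) *
      ⨆ (K : Fin n → Finset ℤ) (_ : ∀ i, #(K i) = l i) (j : ℤ),
        iterConv (fun i => (K i : Set ℤ).indicator 1) h j := by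
  induction n generalizing h with
  | zero =>
    simp only [univ_eq_empty, prod_empty, one_mul]
    exact iSup_le fun j => le_iSup₂_of_le finZeroElim finZeroElim (le_iSup_of_le j le_rfl)
  | succ n ih =>
    set S := ⨆ (K : Fin (n + 1) → Finset ℤ) (_ : ∀ i, #(K i) = l i) (j : ℤ),
        iterConv (fun i => (K i : Set ℤ).indicator 1) h j
    have hpeeled : ∀ K₀ : Finset ℤ, #K₀ = l 0 → ∀ j,
        iterConv (Fin.tail f) (intConv ((K₀ : Set ℤ).indicator 1) h) j ≤
          (∏ i : Fin n, (l i.succ : ℝ≥0∞)⁻¹) * S := by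
      intro K₀ hK₀ j
      have hh' : ∑' k, intConv ((K₀ : Set ℤ).indicator 1) h k ≠ ∞ := by
        rw [tsum_intConv, tsum_indicator_one]
        exact ENNReal.mul_ne_top (ENNReal.natCast_ne_top _) hh
      refine (le_iSup_of_le j le_rfl).trans ((ih (fun i => l i.succ) (fun i => hl i.succ) _
        (fun i => hf i.succ) (fun i => hf1 i.succ) _ hh').trans ?_)
      gcongr
      refine iSup₂_le fun K hK => iSup_le fun j' => ?_
      rw [iterConv_intConv]
      exact le_iSup₂_of_le (Fin.cons K₀ K) (Fin.cases hK₀ hK) (le_iSup_of_le j' le_rfl)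
    refine iSup_le fun j => ?_
    have hQ : ∑' k, iterConv (Fin.tail f) h (j - k) ≠ ∞ := by
      have hshift : ∑' k, iterConv (Fin.tail f) h (j - k) = ∑' k, iterConv (Fin.tail f) h k :=
        (Equiv.subLeft j).tsum_eq _
      rw [hshift, tsum_iterConv]
      exact ENNReal.mul_ne_top (ENNReal.prod_ne_top fun i _ =>
        ne_top_of_le_ne_top ENNReal.one_ne_top (hf1 i.succ)) hh
    calc iterConv f h j
        ≤ (l 0 : ℝ≥0∞)⁻¹ * ⨆ (K₀ : Finset ℤ) (_ : #K₀ = l 0),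
            ∑ k ∈ K₀, iterConv (Fin.tail f) h (j - k) :=
          tsum_mul_le_inv_mul_iSup_sum (hl 0) (hf 0) (hf1 0) hQ
      _ = (l 0 : ℝ≥0∞)⁻¹ * ⨆ (K₀ : Finset ℤ) (_ : #K₀ = l 0),
            iterConv (Fin.tail f) (intConv ((K₀ : Set ℤ).indicator 1) h) j := by
          simp only [iterConv_intConv, intConv_indicator_one]
      _ ≤ (l 0 : ℝ≥0∞)⁻¹ * ((∏ i : Fin n, (l i.succ : ℝ≥0∞)⁻¹) * S) := by
          gcongr
          exact iSup₂_le fun K₀ hK₀ => hpeeled K₀ hK₀ j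
      _ = (∏ i, (l i : ℝ≥0∞)⁻¹) * S := by rw [Fin.prod_univ_succ, mul_assoc]

end Convolution

section Hook

/-! The rectangle `[0, p] × [0, q]` is the disjoint union of the hooks
`{(u, J) | u ≤ p - J} ∪ {(p - J, v) | J ≤ v ≤ q}`, `J ≤ min p q`, each a chain running from rank
`J` to rank `p + q - J`. `hookIdx p u v` is the hook through `(u, v)` and `hookPt p J m` the point
of rank `m` on hook `J`. -/

def hookIdx (p u v : ℕ) : ℕ := if u + v ≤ p then v else p - u

def hookPt (p J m : ℕ) : ℕ × ℕ := if m ≤ p then (m - J, J) else (p - J, m - (p - J))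

variable {p q u v J m m' : ℕ}

theorem hookIdx_le_left : hookIdx p u v ≤ p := by
  unfold hookIdx; split_ifs <;> omega

theorem hookIdx_le_right (hv : v ≤ q) : hookIdx p u v ≤ q := by
  unfold hookIdx; split_ifs <;> omega

theorem hookIdx_le_add : hookIdx p u v ≤ u + v := by
  unfold hookIdx; split_ifs <;> omega

theorem add_add_hookIdx_le (hu : u ≤ p) (hv : v ≤ q) : u + v + hookIdx p u v ≤ p + q := by
  unfold hookIdx; split_ifs <;> omega

theorem hookPt_hookIdx (hu : u ≤ p) : hookPt p (hookIdx p u v) (u + v) = (u, v) := by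
  unfold hookPt hookIdx; split_ifs <;> ext <;> dsimp only <;> omega

theorem hookPt_fst_le : (hookPt p J m).1 ≤ p := by
  unfold hookPt; split_ifs <;> dsimp only <;> omega

theorem hookPt_snd_le (hJp : J ≤ p) (hJq : J ≤ q) (hm : m + J ≤ p + q) :
    (hookPt p J m).2 ≤ q := by
  unfold hookPt; split_ifs <;> dsimp only <;> omega

theorem hookPt_fst_add_snd (hJm : J ≤ m) : (hookPt p J m).1 + (hookPt p J m).2 = m := by
  unfold hookPt; split_ifs <;> dsimp only <;> omega

theorem hookIdx_hookPt (hJp : J ≤ p) (hJm : J ≤ m) :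
    hookIdx p (hookPt p J m).1 (hookPt p J m).2 = J := by
  unfold hookPt hookIdx; split_ifs <;> simp_all <;> omega

theorem hookPt_mono (hJp : J ≤ p) (hJm : J ≤ m) (hmm' : m ≤ m') :
    hookPt p J m ≤ hookPt p J m' := by
  unfold hookPt; split_ifs <;> simp only [Prod.mk_le_mk] <;> omega

end Hook

section SymmChainDecomp

/-- A symmetric chain decomposition of the box `{x | x ≤ b}`: the chain through `x` is
`E x k`, `a x ≤ k ≤ ∑ b - a x`, where `E x k` has rank `k`. -/
structure IsSymmChainDecomp {n : ℕ} (b : Fin n → ℕ) (a : (Fin n → ℕ) → ℕ)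
    (E : (Fin n → ℕ) → ℕ → Fin n → ℕ) : Prop where
  start_le : ∀ x ≤ b, a x ≤ ∑ i, x i
  rank_add_start_le : ∀ x ≤ b, ∑ i, x i + a x ≤ ∑ i, b i
  chain_rank : ∀ x ≤ b, E x (∑ i, x i) = x
  chain_le : ∀ x ≤ b, ∀ k, a x ≤ k → k + a x ≤ ∑ i, b i → E x k ≤ b
  sum_chain : ∀ x ≤ b, ∀ k, a x ≤ k → k + a x ≤ ∑ i, b i → ∑ i, E x k i = k
  start_chain : ∀ x ≤ b, ∀ k, a x ≤ k → k + a x ≤ ∑ i, b i → a (E x k) = a x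
  chain_chain : ∀ x ≤ b, ∀ k, a x ≤ k → k + a x ≤ ∑ i, b i → E (E x k) = E x
  chain_mono : ∀ x ≤ b, ∀ k k', a x ≤ k → k ≤ k' → k' + a x ≤ ∑ i, b i → E x k ≤ E x k'

theorem isSymmChainDecomp_fin_zero (b : Fin 0 → ℕ) :
    IsSymmChainDecomp b (fun _ => 0) (fun x _ => x) where
  start_le _ _ := by simp
  rank_add_start_le _ _ := by simp
  chain_rank _ _ := rfl
  chain_le _ hx _ _ _ := hx
  sum_chain _ _ _ _ hk := by simp at hk ⊢; omega
  start_chain _ _ _ _ _ := rfl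
  chain_chain _ _ _ _ _ := rfl
  chain_mono _ _ _ _ _ _ _ := le_rfl

variable {n : ℕ} (a : (Fin n → ℕ) → ℕ) (E : (Fin n → ℕ) → ℕ → Fin n → ℕ) (p : ℕ)

/-! Given a decomposition `(a, E)` of a box, `x ↦ (x 0, ∑ tail x - a (tail x))` identifies the
product of `[0, p]` with the chain through `tail x` with a rectangle `[0, p] × [0, q]`; the hooks
of these rectangles are the chains of the decomposition of `[0, p] × box`. -/

def consHook (x : Fin (n + 1) → ℕ) : ℕ :=
  hookIdx p (x 0) (∑ i, Fin.tail x i - a (Fin.tail x))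

def consStart (x : Fin (n + 1) → ℕ) : ℕ := a (Fin.tail x) + consHook a p x

def consChain (x : Fin (n + 1) → ℕ) (k : ℕ) : Fin (n + 1) → ℕ :=
  Fin.cons (hookPt p (consHook a p x) (k - a (Fin.tail x))).1
    (E (Fin.tail x) (a (Fin.tail x) + (hookPt p (consHook a p x) (k - a (Fin.tail x))).2))

end SymmChainDecomp

theorem Fin.tail_le_tail {n : ℕ} {α : Type*} [Preorder α] {x y : Fin (n + 1) → α} (h : x ≤ y) :
    Fin.tail x ≤ Fin.tail y :=
  fun i => h i.succ

theorem Fin.sum_univ_eq_add_sum_tail {n : ℕ} {M : Type*} [AddCommMonoid M] (x : Fin (n + 1) → M) :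
    ∑ i, x i = x 0 + ∑ i, Fin.tail x i :=
  Fin.sum_univ_succ x

namespace IsSymmChainDecomp

variable {n : ℕ} {b : Fin (n + 1) → ℕ} {a : (Fin n → ℕ) → ℕ} {E : (Fin n → ℕ) → ℕ → Fin n → ℕ}
  {x : Fin (n + 1) → ℕ} {k : ℕ}

theorem consHook_add_le (h : IsSymmChainDecomp (Fin.tail b) a E) (hx : x ≤ b) :
    consHook a (b 0) x + 2 * a (Fin.tail x) ≤ ∑ i, Fin.tail b i := by
  have h1 := h.start_le _ (Fin.tail_le_tail hx)
  have h2 := h.rank_add_start_le _ (Fin.tail_le_tail hx)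
  have := hookIdx_le_right (p := b 0) (u := x 0) (q := ∑ i, Fin.tail b i - 2 * a (Fin.tail x))
    (v := ∑ i, Fin.tail x i - a (Fin.tail x)) (by omega)
  unfold consHook; omega

theorem consStart_le (h : IsSymmChainDecomp (Fin.tail b) a E) (hx : x ≤ b) :
    consStart a (b 0) x ≤ ∑ i, x i := by
  have h1 := h.start_le _ (Fin.tail_le_tail hx)
  have := hookIdx_le_add (p := b 0) (u := x 0) (v := ∑ i, Fin.tail x i - a (Fin.tail x))
  unfold consStart consHook; rw [Fin.sum_univ_eq_add_sum_tail]; omega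

theorem rank_add_consStart_le (h : IsSymmChainDecomp (Fin.tail b) a E) (hx : x ≤ b) :
    ∑ i, x i + consStart a (b 0) x ≤ ∑ i, b i := by
  have h1 := h.start_le _ (Fin.tail_le_tail hx)
  have h2 := h.rank_add_start_le _ (Fin.tail_le_tail hx)
  have := add_add_hookIdx_le (p := b 0) (u := x 0) (q := ∑ i, Fin.tail b i - 2 * a (Fin.tail x))
    (v := ∑ i, Fin.tail x i - a (Fin.tail x)) (hx 0) (by omega)
  unfold consStart consHook
  rw [Fin.sum_univ_eq_add_sum_tail x, Fin.sum_univ_eq_add_sum_tail b]; omega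

theorem consChain_zero : consChain a E (b 0) x k 0 =
    (hookPt (b 0) (consHook a (b 0) x) (k - a (Fin.tail x))).1 := Fin.cons_zero _ _

theorem tail_consChain : Fin.tail (consChain a E (b 0) x k) = E (Fin.tail x) (a (Fin.tail x) +
    (hookPt (b 0) (consHook a (b 0) x) (k - a (Fin.tail x))).2) := Fin.tail_cons _ _

theorem snd_hookPt_add_le (h : IsSymmChainDecomp (Fin.tail b) a E) (hx : x ≤ b)
    (hk : k + consStart a (b 0) x ≤ ∑ i, b i) :
    a (Fin.tail x) + (hookPt (b 0) (consHook a (b 0) x) (k - a (Fin.tail x))).2 + a (Fin.tail x)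
      ≤ ∑ i, Fin.tail b i := by
  have := h.consHook_add_le hx
  have := hookPt_snd_le (p := b 0) (q := ∑ i, Fin.tail b i - 2 * a (Fin.tail x))
    (J := consHook a (b 0) x) (m := k - a (Fin.tail x)) hookIdx_le_left (by omega)
    (by unfold consStart at hk; rw [Fin.sum_univ_eq_add_sum_tail b] at hk; omega)
  omega

theorem sum_consChain (h : IsSymmChainDecomp (Fin.tail b) a E) (hx : x ≤ b)
    (hk₁ : consStart a (b 0) x ≤ k) (hk₂ : k + consStart a (b 0) x ≤ ∑ i, b i) :
    ∑ i, consChain a E (b 0) x k i = k := by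
  rw [Fin.sum_univ_eq_add_sum_tail, consChain_zero, tail_consChain,
    h.sum_chain _ (Fin.tail_le_tail hx) _ le_self_add (h.snd_hookPt_add_le hx hk₂)]
  unfold consStart at hk₁
  have := hookPt_fst_add_snd (p := b 0) (J := consHook a (b 0) x) (m := k - a (Fin.tail x))
    (by omega)
  omega

theorem consHook_consChain (h : IsSymmChainDecomp (Fin.tail b) a E) (hx : x ≤ b)
    (hk₁ : consStart a (b 0) x ≤ k) (hk₂ : k + consStart a (b 0) x ≤ ∑ i, b i) :
    consHook a (b 0) (consChain a E (b 0) x k) = consHook a (b 0) x := by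
  have hz := Fin.tail_le_tail hx
  have hr := h.snd_hookPt_add_le hx hk₂
  unfold consHook
  rw [consChain_zero, tail_consChain, h.sum_chain _ hz _ le_self_add hr,
    h.start_chain _ hz _ le_self_add hr, Nat.add_sub_cancel_left]
  unfold consStart at hk₁
  exact hookIdx_hookPt hookIdx_le_left (by omega)

theorem consStart_consChain (h : IsSymmChainDecomp (Fin.tail b) a E) (hx : x ≤ b)
    (hk₁ : consStart a (b 0) x ≤ k) (hk₂ : k + consStart a (b 0) x ≤ ∑ i, b i) :
    consStart a (b 0) (consChain a E (b 0) x k) = consStart a (b 0) x := by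
  rw [consStart, h.consHook_consChain hx hk₁ hk₂, tail_consChain,
    h.start_chain _ (Fin.tail_le_tail hx) _ le_self_add (h.snd_hookPt_add_le hx hk₂), consStart]

theorem consChain_congr {y : Fin (n + 1) → ℕ} (hJ : consHook a (b 0) y = consHook a (b 0) x)
    (ha : a (Fin.tail y) = a (Fin.tail x)) (hE : E (Fin.tail y) = E (Fin.tail x)) :
    consChain a E (b 0) y = consChain a E (b 0) x := by
  unfold consChain; rw [hJ, ha, hE]

theorem cons (h : IsSymmChainDecomp (Fin.tail b) a E) :
    IsSymmChainDecomp b (consStart a (b 0)) (consChain a E (b 0)) where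
  start_le _ hx := h.consStart_le hx
  rank_add_start_le _ hx := h.rank_add_consStart_le hx
  chain_rank x hx := by
    have hz := Fin.tail_le_tail hx
    have h1 := h.start_le _ hz
    have hm : ∑ i, x i - a (Fin.tail x) = x 0 + (∑ i, Fin.tail x i - a (Fin.tail x)) := by
      rw [Fin.sum_univ_eq_add_sum_tail]; omega
    rw [consChain, hm, consHook, hookPt_hookIdx (hx 0), Nat.add_sub_cancel' h1, h.chain_rank _ hz,
      Fin.cons_self_tail]
  chain_le x hx k hk₁ hk₂ := by
    rw [← Fin.cons_self_tail b, consChain, Fin.cons_le_cons]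
    exact ⟨hookPt_fst_le,
      h.chain_le _ (Fin.tail_le_tail hx) _ le_self_add (h.snd_hookPt_add_le hx hk₂)⟩
  sum_chain _ hx _ hk₁ hk₂ := h.sum_consChain hx hk₁ hk₂
  start_chain _ hx _ hk₁ hk₂ := h.consStart_consChain hx hk₁ hk₂
  chain_chain x hx k hk₁ hk₂ := by
    have hz := Fin.tail_le_tail hx
    have hr := h.snd_hookPt_add_le hx hk₂
    funext k'
    exact congrFun (consChain_congr (h.consHook_consChain hx hk₁ hk₂)
      (by rw [tail_consChain, h.start_chain _ hz _ le_self_add hr])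
      (by rw [tail_consChain, h.chain_chain _ hz _ le_self_add hr])) k'
  chain_mono x hx k k' hk₁ hkk' hk₂ := by
    unfold consStart at hk₁
    have hpt := hookPt_mono (p := b 0) (J := consHook a (b 0) x) (m := k - a (Fin.tail x))
      (m' := k' - a (Fin.tail x)) hookIdx_le_left (by omega) (by omega)
    rw [consChain, consChain, Fin.cons_le_cons]
    exact ⟨hpt.1, h.chain_mono _ (Fin.tail_le_tail hx) _ _ le_self_add (by gcongr; exact hpt.2)
      (h.snd_hookPt_add_le hx hk₂)⟩

end IsSymmChainDecomp

theorem exists_isSymmChainDecomp : ∀ {n : ℕ} (b : Fin n → ℕ), ∃ a E, IsSymmChainDecomp b a E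
  | 0, b => ⟨_, _, isSymmChainDecomp_fin_zero b⟩
  | _ + 1, b =>
    have ⟨_, _, h⟩ := exists_isSymmChainDecomp (Fin.tail b)
    ⟨_, _, h.cons⟩

theorem IsSymmChainDecomp.le_or_le_of_chain_eq {n : ℕ} {b : Fin n → ℕ} {a : (Fin n → ℕ) → ℕ}
    {E : (Fin n → ℕ) → ℕ → Fin n → ℕ} (h : IsSymmChainDecomp b a E) {x y : Fin n → ℕ} {m : ℕ}
    (hx : x ≤ b) (hy : y ≤ b) (hxm₁ : a x ≤ m) (hxm₂ : m + a x ≤ ∑ i, b i) (hym₁ : a y ≤ m)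
    (hym₂ : m + a y ≤ ∑ i, b i) (hxy : E x m = E y m) : x ≤ y ∨ y ≤ x := by
  have ha : a x = a y := by
    rw [← h.start_chain x hx m hxm₁ hxm₂, hxy, h.start_chain y hy m hym₁ hym₂]
  have hE : E x = E y := by
    rw [← h.chain_chain x hx m hxm₁ hxm₂, hxy, h.chain_chain y hy m hym₁ hym₂]
  have hx₁ := h.start_le x hx
  have hx₂ := h.rank_add_start_le x hx
  have hy₁ := h.start_le y hy
  have hy₂ := h.rank_add_start_le y hy
  rcases le_total (∑ i, x i) (∑ i, y i) with hle | hle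
  · left
    have := h.chain_mono y hy _ _ (by omega) hle hy₂
    rwa [← hE, h.chain_rank x hx, hE, h.chain_rank y hy] at this
  · right
    have := h.chain_mono x hx _ _ (by omega) hle hx₂
    rwa [hE, h.chain_rank y hy, ← hE, h.chain_rank x hx] at this

theorem card_le_card_middle_of_isAntichain {n : ℕ} (b : Fin n → ℕ) {S : Finset (Fin n → ℕ)}
    (hSb : ∀ x ∈ S, x ≤ b) (hS : IsAntichain (· ≤ ·) (S : Set (Fin n → ℕ))) :
    #S ≤ #{x ∈ Iic b | ∑ i, x i = (∑ i, b i) / 2} := by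
  obtain ⟨a, E, h⟩ := exists_isSymmChainDecomp b
  have hmid : ∀ x ≤ b, a x ≤ (∑ i, b i) / 2 ∧ (∑ i, b i) / 2 + a x ≤ ∑ i, b i := fun x hx => by
    have := h.start_le x hx
    have := h.rank_add_start_le x hx
    omega
  refine card_le_card_of_injOn (E · ((∑ i, b i) / 2)) (fun x hx => ?_) fun x hx y hy hxy => ?_
  · obtain ⟨h₁, h₂⟩ := hmid x (hSb x hx)
    simp only [coe_filter, mem_Iic, Set.mem_ofPred_eq]
    exact ⟨h.chain_le x (hSb x hx) _ h₁ h₂, h.sum_chain x (hSb x hx) _ h₁ h₂⟩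
  · obtain ⟨hx₁, hx₂⟩ := hmid x (hSb x hx)
    obtain ⟨hy₁, hy₂⟩ := hmid y (hSb y hy)
    rcases h.le_or_le_of_chain_eq (hSb x hx) (hSb y hy) hx₁ hx₂ hy₁ hy₂ hxy with hle | hle
    exacts [hS.eq hx hy hle, (hS.eq hy hx hle).symm]

theorem strictMonoOn_card_filter_lt {α : Type*} [LinearOrder α] (s : Finset α) :
    StrictMonoOn (fun t => #{k ∈ s | k < t}) s := by
  intro t ht u hu htu
  refine card_lt_card ((ssubset_iff_of_subset fun k hk => ?_).2 ⟨t, by simp [mem_coe.1 ht, htu]⟩)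
  simp only [mem_filter] at hk ⊢
  exact ⟨hk.1, hk.2.trans htu⟩

theorem card_filter_lt_lt {α : Type*} [LinearOrder α] {s : Finset α} {t : α} (ht : t ∈ s) :
    #{k ∈ s | k < t} < #s :=
  card_lt_card (filter_ssubset.2 ⟨t, ht, lt_irrefl t⟩)

theorem card_filter_sum_eq_le_card_middle {n : ℕ} (K : Fin n → Finset ℤ) (j : ℤ) :
    #{x ∈ Fintype.piFinset K | ∑ i, x i = j} ≤
      #{y ∈ Iic (fun i => #(K i) - 1) | ∑ i, y i = (∑ i, (#(K i) - 1)) / 2} := by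
  set sol := {x ∈ Fintype.piFinset K | ∑ i, x i = j}
  have hmem : ∀ x ∈ sol, ∀ i, x i ∈ K i := fun x hx =>
    Fintype.mem_piFinset.1 (mem_filter.1 hx).1
  have hsum : ∀ x ∈ sol, ∑ i, x i = j := fun x hx => (mem_filter.1 hx).2
  set φ : (Fin n → ℤ) → Fin n → ℕ := fun x i => #{k ∈ K i | k < x i}
  have hreflect : ∀ x ∈ sol, ∀ y ∈ sol, φ x ≤ φ y → x ≤ y := fun x hx y hy hle i =>
    ((strictMonoOn_card_filter_lt (K i)).le_iff_le (hmem x hx i) (hmem y hy i)).1 (hle i)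
  have hinj : Set.InjOn φ sol := fun x hx y hy hxy =>
    le_antisymm (hreflect x hx y hy hxy.le) (hreflect y hy x hx hxy.ge)
  rw [← card_image_of_injOn hinj]
  refine card_le_card_middle_of_isAntichain _ (fun y hy => ?_) ?_
  · obtain ⟨x, hx, rfl⟩ := mem_image.1 hy
    intro i
    have := card_filter_lt_lt (hmem x hx i)
    simp only [φ]
    omega
  · simp only [coe_image]
    rintro _ ⟨x, hx, rfl⟩ _ ⟨y, hy, rfl⟩ hne hle
    have hlt : x < y := lt_of_le_of_ne (hreflect x hx y hy hle) (by rintro rfl; exact hne rfl)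
    obtain ⟨i, hi⟩ := (Pi.lt_def.1 hlt).2
    have := sum_lt_sum (fun i _ => hlt.le i) ⟨i, mem_univ i, hi⟩
    rw [hsum x hx, hsum y hy] at this
    exact lt_irrefl j this

theorem card_filter_sum_eq_le_card_filter_sum_Ico {ι : Type*} [Fintype ι] [DecidableEq ι]
    (l : ι → ℕ) (hl : ∀ i, 0 < l i) (m : ℕ) :
    #{y ∈ Iic (fun i => l i - 1) | ∑ i, y i = m} ≤
      #{x ∈ Fintype.piFinset fun i => Ico (0 : ℤ) (l i) | ∑ i, x i = (m : ℤ)} := by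
  refine card_le_card_of_injOn (fun y i => (y i : ℤ)) (fun y hy => ?_) fun y _ z _ hyz => ?_
  · simp only [coe_filter, mem_Iic, Set.mem_ofPred_eq, Fintype.mem_piFinset, mem_Ico] at hy ⊢
    refine ⟨fun i => ⟨Int.natCast_nonneg _, ?_⟩, by rw [← hy.2]; push_cast; rfl⟩
    have : y i ≤ l i - 1 := hy.1 i
    have := hl i
    omega
  · funext i
    exact Int.ofNat_inj.1 (congrFun hyz i)

theorem card_filter_sum_eq_le_of_card_eq {n : ℕ} (l : Fin n → ℕ) (hl : ∀ i, 0 < l i)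
    (K : Fin n → Finset ℤ) (hK : ∀ i, #(K i) = l i) (j : ℤ) :
    #{x ∈ Fintype.piFinset K | ∑ i, x i = j} ≤
      #{x ∈ Fintype.piFinset fun i => Ico (0 : ℤ) (l i) |
        ∑ i, x i = (((∑ i, (l i - 1)) / 2 : ℕ) : ℤ)} := by
  have := card_filter_sum_eq_le_card_middle K j
  simp only [hK] at this
  exact this.trans (card_filter_sum_eq_le_card_filter_sum_Ico l hl _)

theorem count_restrict_apply_singleton {α : Type*} [MeasurableSpace α]
    [MeasurableSingletonClass α] (s : Set α) (k : α) :
    Measure.count.restrict s {k} = s.indicator 1 k := by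
  rw [Measure.restrict_apply (measurableSet_singleton k)]
  by_cases hk : k ∈ s
  · simp [hk, Set.singleton_inter_of_mem hk]
  · simp [hk, Set.singleton_inter_of_notMem hk]

theorem tsum_measure_singleton {α : Type*} [MeasurableSpace α] [Countable α]
    [MeasurableSingletonClass α] (μ : Measure α) : ∑' k, μ {k} = μ Set.univ := by
  simpa using Measure.tsum_indicator_apply_singleton μ _ MeasurableSet.univ

theorem map_pi_sum_apply_singleton {ι : Type*} [Fintype ι] (μ : ι → Measure ℤ)
    [∀ i, SigmaFinite (μ i)] (j : ℤ) :
    (Measure.pi μ).map (fun x : ι → ℤ => ∑ i, x i) {j} = sumMass (fun i k => μ i {k}) j := by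
  classical
  rw [Measure.map_apply (measurable_of_countable _) (measurableSet_singleton j),
    ← Measure.tsum_indicator_apply_singleton _ _ (measurableSet_singleton j |>.preimage
      (measurable_of_countable _))]
  simp [sumMass, Set.indicator_apply]

/-- discrete Rogozin-type inequality: if independent integer random variables
have maximal point masses at most `1/lᵢ`, the maximal point mass of their sum is at most
that of a sum of independent uniforms on `{0, …, lᵢ − 1}`. -/
theorem stmt14 (n : ℕ) (l : Fin n → ℕ) (hl : ∀ i, 0 < l i)
    (μ : Fin n → Measure ℤ) (hprob : ∀ i, IsProbabilityMeasure (μ i))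
    (hμ : ∀ (i : Fin n) (j : ℤ), μ i {j} ≤ ((l i : ℝ≥0∞))⁻¹)
    (ν : Fin n → Measure ℤ)
    (hν : ∀ i, ν i = ((l i : ℝ≥0∞))⁻¹ •
      Measure.count.restrict {j : ℤ | 0 ≤ j ∧ j < (l i : ℤ)}) :
    (⨆ j : ℤ, ((Measure.pi μ).map (fun x : Fin n → ℤ => ∑ i, x i)) {j})
      ≤ ⨆ j : ℤ, ((Measure.pi ν).map (fun x : Fin n → ℤ => ∑ i, x i)) {j} := by
  have hν_singleton (i : Fin n) (k : ℤ) :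
      ν i {k} = (l i : ℝ≥0∞)⁻¹ * (Ico (0 : ℤ) (l i) : Set ℤ).indicator 1 k := by
    rw [hν i, Measure.smul_apply, smul_eq_mul, count_restrict_apply_singleton, coe_Ico]
    rfl
  have (i : Fin n) : SigmaFinite (ν i) :=
    Measure.sigmaFinite_iff_measure_singleton_lt_top.2 fun k => by
      rw [hν_singleton]
      exact ENNReal.mul_lt_top (ENNReal.inv_lt_top.2 (mod_cast hl i))
        ((Set.indicator_le (fun _ _ => le_rfl) k).trans_lt ENNReal.one_lt_top)
  have hμ_total (i : Fin n) : ∑' k, μ i {k} ≤ 1 := by rw [tsum_measure_singleton, measure_univ]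
  calc ⨆ j, (Measure.pi μ).map (fun x : Fin n → ℤ => ∑ i, x i) {j}
      = ⨆ j, iterConv (fun i k => μ i {k}) (Pi.single 0 1) j := by
        simp_rw [map_pi_sum_apply_singleton, iterConv_single_zero]
    _ ≤ (∏ i, (l i : ℝ≥0∞)⁻¹) * ⨆ (K : Fin n → Finset ℤ) (_ : ∀ i, #(K i) = l i) (j : ℤ),
          iterConv (fun i => (K i : Set ℤ).indicator 1) (Pi.single 0 1) j :=
        iSup_iterConv_le l hl _ hμ hμ_total _ (by simp)
    _ ≤ (∏ i, (l i : ℝ≥0∞)⁻¹) * ⨆ t : ℤ,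
          (#{x ∈ Fintype.piFinset fun i => Ico (0 : ℤ) (l i) | ∑ i, x i = t} : ℝ≥0∞) := by
        gcongr
        refine iSup₂_le fun K hK => iSup_le fun j => ?_
        rw [iterConv_single_zero, sumMass_indicator_one]
        exact le_iSup_of_le _ (mod_cast card_filter_sum_eq_le_of_card_eq l hl K hK j)
    _ = ⨆ t, (Measure.pi ν).map (fun x : Fin n → ℤ => ∑ i, x i) {t} := by
        simp_rw [ENNReal.mul_iSup, map_pi_sum_apply_singleton, hν_singleton, sumMass_const_mul,
          sumMass_indicator_one]
end

section
/- Let G be a countable discrete group with counting reference measure, and let X_1, …, X_n be independent G-valued random variables, each with finite support. Write M(X_i) = max_{g∈G} P(X_i = g). Then max_{g∈G} P(X_1 ⋯ X_n = g) ≤ sup max_{g∈G} P(V_1 ⋯ V_n = g), where the supremum is over all tuples of independent G-valued random variables V_1, …, V_n such that V_i is uniformly distributed on some subset of G of cardinality ⌊1/M(X_i)⌋. -/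
/-!
Scaled by `k`, a probability measure supported on a finite set `F` whose atoms are at most `1 / k`
(here `k = ⌊1 / M(Xᵢ)⌋`) is a point of the hypersimplex `{x ∈ [0, 1]^F | ∑ x = k}`. An extreme point of the hypersimplex has
no fractional coordinate: a single one is excluded because the coordinate sum is an integer, and
two of them can be moved against each other. By Krein–Milman the measure is therefore a convex
combination of uniform measures on `k`-element sets. Since `Measure.pi` is multilinear, the law of
`X₁ ⋯ Xₙ` is a convex combination of laws of products of independent such uniforms, so each of
its point masses is bounded by the supremum on the right.
-/

open MeasureTheory ProbabilityTheory
open scoped ENNReal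

def hypersimplex {α : Type*} (F : Finset α) (k : ℕ) : Set (α → ℝ) :=
  {x | (∀ a, 0 ≤ x a ∧ x a ≤ 1) ∧ (∀ a ∉ F, x a = 0) ∧ ∑ a ∈ F, x a = k}

section Hypersimplex

variable {α : Type*} {F : Finset α} {k : ℕ}

theorem convex_hypersimplex : Convex ℝ (hypersimplex F k) := by
  rintro x ⟨hx01, hx0, hxs⟩ y ⟨hy01, hy0, hys⟩ a b ha hb hab
  refine ⟨fun c => ⟨?_, ?_⟩, fun c hc => ?_, ?_⟩
  · simp only [Pi.add_apply, Pi.smul_apply, smul_eq_mul]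
    nlinarith [hx01 c, hy01 c]
  · simp only [Pi.add_apply, Pi.smul_apply, smul_eq_mul]
    nlinarith [hx01 c, hy01 c]
  · simp [hx0 c hc, hy0 c hc]
  · simp only [Pi.add_apply, Pi.smul_apply, smul_eq_mul, Finset.sum_add_distrib,
      ← Finset.mul_sum, hxs, hys]
    rw [← add_mul, hab, one_mul]

theorem isCompact_hypersimplex : IsCompact (hypersimplex F k) := by
  refine (isCompact_univ_pi fun _ => isCompact_Icc (a := (0 : ℝ)) (b := 1)).of_isClosed_subset
    ?_ fun x hx a _ => hx.1 a
  have hcoord : ∀ a, Continuous fun x : α → ℝ => x a := continuous_apply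
  simp only [hypersimplex, Set.ofPred_and, Set.ofPred_forall]
  refine IsClosed.inter (isClosed_iInter fun a => ?_) (IsClosed.inter
    (isClosed_iInter fun a => isClosed_iInter fun _ => isClosed_eq (hcoord a) continuous_const)
    (isClosed_eq (continuous_finsetSum _ fun a _ => hcoord a) continuous_const))
  exact (isClosed_le continuous_const (hcoord a)).inter (isClosed_le (hcoord a) continuous_const)

theorem hypersimplex.exists_ne_mem_Ioo {x : α → ℝ} (hx : x ∈ hypersimplex F k) {i : α}
    (hi : x i ∈ Set.Ioo 0 1) : ∃ j ≠ i, x j ∈ Set.Ioo 0 1 := by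
  classical
  obtain ⟨hx01, hx0, hxs⟩ := hx
  by_contra! h
  have hiF : i ∈ F := by by_contra hiF; linarith [hx0 i hiF, hi.1]
  have hint : ∀ a ∈ F.erase i, ((⌊x a⌋ : ℤ) : ℝ) = x a := by
    intro a ha
    rcases (hx01 a).1.eq_or_lt with h0 | h0
    · simp [← h0]
    · rw [le_antisymm (hx01 a).2 (not_lt.1 fun h1 => h a (Finset.ne_of_mem_erase ha) ⟨h0, h1⟩)]
      simp
  have hsum : x i + ((∑ a ∈ F.erase i, ⌊x a⌋ : ℤ) : ℝ) = k := by
    rw [Int.cast_sum, Finset.sum_congr rfl hint, Finset.add_sum_erase F x hiF, hxs]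
  generalize ∑ a ∈ F.erase i, ⌊x a⌋ = m at hsum
  have h1 : ((m : ℤ) : ℝ) < k := by linarith [hi.1]
  have h2 : (k : ℝ) < m + 1 := by linarith [hi.2]
  norm_cast at h1 h2
  omega

theorem hypersimplex.add_smul_single_sub_single_mem [DecidableEq α] {x : α → ℝ}
    (hx : x ∈ hypersimplex F k) {i j : α} (hi : i ∈ F) (hj : j ∈ F) (hij : i ≠ j) {t : ℝ}
    (hti : 0 ≤ x i + t ∧ x i + t ≤ 1) (htj : 0 ≤ x j - t ∧ x j - t ≤ 1) :
    x + t • (Pi.single i 1 - Pi.single j 1) ∈ hypersimplex F k := by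
  obtain ⟨hx01, hx0, hxs⟩ := hx
  refine ⟨fun a => ?_, fun a ha => ?_, ?_⟩
  · by_cases hai : a = i
    · subst hai; simpa [hij] using hti
    by_cases haj : a = j
    · subst haj; simpa [hai, sub_eq_add_neg] using htj
    simpa [hai, haj] using hx01 a
  · have hai : a ≠ i := (ne_of_mem_of_not_mem hi ha).symm
    have haj : a ≠ j := (ne_of_mem_of_not_mem hj ha).symm
    simp [hai, haj, hx0 a ha]
  · simp [Finset.sum_add_distrib, ← Finset.mul_sum, Finset.sum_sub_distrib, hi, hj, hxs]

theorem hypersimplex.eq_zero_or_eq_one_of_mem_extremePoints {x : α → ℝ}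
    (hx : x ∈ (hypersimplex F k).extremePoints ℝ) (i : α) : x i = 0 ∨ x i = 1 := by
  classical
  obtain ⟨hxH, hext⟩ := hx
  by_contra! h
  have hi : x i ∈ Set.Ioo 0 1 := ⟨(hxH.1 i).1.lt_of_ne h.1.symm, (hxH.1 i).2.lt_of_ne h.2⟩
  obtain ⟨j, hji, hj⟩ := exists_ne_mem_Ioo hxH hi
  have hF : ∀ a, 0 < x a → a ∈ F := fun a ha => by
    by_contra haF; exact ha.ne' (hxH.2.1 a haF)
  set ε := min (min (x i) (1 - x i)) (min (x j) (1 - x j))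
  have hε : 0 < ε := lt_min (lt_min hi.1 (by linarith [hi.2])) (lt_min hj.1 (by linarith [hj.2]))
  have hεi : ε ≤ x i ∧ ε ≤ 1 - x i :=
    ⟨(min_le_left _ _).trans (min_le_left _ _), (min_le_left _ _).trans (min_le_right _ _)⟩
  have hεj : ε ≤ x j ∧ ε ≤ 1 - x j :=
    ⟨(min_le_right _ _).trans (min_le_left _ _), (min_le_right _ _).trans (min_le_right _ _)⟩
  set d : α → ℝ := Pi.single i 1 - Pi.single j 1
  have h₁ : x + ε • d ∈ hypersimplex F k := add_smul_single_sub_single_mem hxH (hF i hi.1)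
    (hF j hj.1) hji.symm ⟨by linarith, by linarith⟩ ⟨by linarith, by linarith⟩
  have h₂ : x + (-ε) • d ∈ hypersimplex F k := add_smul_single_sub_single_mem hxH (hF i hi.1)
    (hF j hj.1) hji.symm ⟨by linarith, by linarith⟩ ⟨by linarith, by linarith⟩
  have hseg : x ∈ openSegment ℝ (x + ε • d) (x + (-ε) • d) :=
    ⟨1 / 2, 1 / 2, by norm_num, by norm_num, by norm_num, by module⟩
  have hεd := congrFun (hext h₁ h₂ hseg) i
  simp [d, hji.symm] at hεd
  exact hε.ne' hεd

theorem extremePoints_hypersimplex_subset :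
    (hypersimplex F k).extremePoints ℝ ⊆
      (fun T : Finset α => (T : Set α).indicator (1 : α → ℝ)) '' ↑(F.powersetCard k) := by
  classical
  intro x hx
  have h01 := hypersimplex.eq_zero_or_eq_one_of_mem_extremePoints hx
  obtain ⟨-, hx0, hxs⟩ := hx.1
  have hind : (↑(F.filter (x · = 1)) : Set α).indicator 1 = x := by
    ext a
    by_cases ha : a ∈ F
    · rcases h01 a with h | h <;> simp [Set.indicator, ha, h]
    · simp [Set.indicator, ha, hx0 a ha]
  refine ⟨F.filter (x · = 1), Finset.mem_powersetCard.2 ⟨Finset.filter_subset _ _, ?_⟩, hind⟩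
  rw [← hind] at hxs
  have hcard : ((F.filter (x · = 1)).card : ℝ) = k := by
    rw [← hxs, Finset.sum_indicator_subset (1 : α → ℝ) (Finset.filter_subset _ F)]
    simp
  exact_mod_cast hcard

theorem hypersimplex_subset_convexHull :
    hypersimplex F k ⊆ convexHull ℝ
      ((fun T : Finset α => (T : Set α).indicator (1 : α → ℝ)) '' ↑(F.powersetCard k)) := by
  have hfin := (F.powersetCard k).finite_toSet.image
    fun T : Finset α => (T : Set α).indicator (1 : α → ℝ)
  calc hypersimplex F k
      = closure (convexHull ℝ ((hypersimplex F k).extremePoints ℝ)) :=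
        (closure_convexHull_extremePoints isCompact_hypersimplex convex_hypersimplex).symm
    _ ⊆ closure (convexHull ℝ _) := closure_mono (convexHull_mono extremePoints_hypersimplex_subset)
    _ = _ := (hfin.isClosed_convexHull ℝ).closure_eq

theorem hypersimplex.exists_sum_smul_indicator {x : α → ℝ} (hx : x ∈ hypersimplex F k) :
    ∃ w : Finset α → ℝ, (∀ T ∈ F.powersetCard k, 0 ≤ w T) ∧ ∑ T ∈ F.powersetCard k, w T = 1 ∧
      ∑ T ∈ F.powersetCard k, w T • (T : Set α).indicator (1 : α → ℝ) = x := by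
  classical
  have hinj : Set.InjOn (fun T : Finset α => (T : Set α).indicator (1 : α → ℝ))
      ↑(F.powersetCard k) :=
    fun T _ T' _ h => Finset.coe_injective (Set.indicator_one_inj ℝ h)
  have hx' := hypersimplex_subset_convexHull hx
  rw [← Finset.coe_image, Finset.mem_convexHull'] at hx'
  obtain ⟨w, hw0, hw1, hwx⟩ := hx'
  rw [Finset.sum_image hinj] at hw1 hwx
  exact ⟨fun T => w ((T : Set α).indicator 1), fun T hT => hw0 _ (Finset.mem_image_of_mem _ hT),
    hw1, hwx⟩

end Hypersimplex

theorem ENNReal.natFloor_toReal_le (t : ℝ≥0∞) : (⌊t.toReal⌋₊ : ℝ≥0∞) ≤ t := by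
  rcases eq_or_ne t ⊤ with rfl | ht
  · exact le_top
  calc (⌊t.toReal⌋₊ : ℝ≥0∞) = ENNReal.ofReal ⌊t.toReal⌋₊ := (ENNReal.ofReal_natCast _).symm
    _ ≤ ENNReal.ofReal t.toReal := ENNReal.ofReal_le_ofReal (Nat.floor_le ENNReal.toReal_nonneg)
    _ = t := ENNReal.ofReal_toReal ht

section Atoms

variable {α : Type*} [MeasurableSpace α]

theorem measure_singleton_le_inv_natFloor (μ : Measure α) (a : α) :
    μ {a} ≤ (⌊(⨆ b, μ {b})⁻¹.toReal⌋₊ : ℝ≥0∞)⁻¹ :=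
  (le_iSup (fun b => μ {b}) a).trans (ENNReal.le_inv_iff_le_inv.1 (ENNReal.natFloor_toReal_le _))

theorem natFloor_inv_iSup_measure_singleton_ne_zero [Countable α] (μ : Measure α)
    [IsProbabilityMeasure μ] : ⌊(⨆ a, μ {a})⁻¹.toReal⌋₊ ≠ 0 := by
  have hM0 : ⨆ a, μ {a} ≠ 0 := fun h => IsProbabilityMeasure.ne_zero μ <|
    Measure.ext_iff_singleton.2 fun a => by simpa using ENNReal.iSup_eq_zero.1 h a
  have hM1 : ⨆ a, μ {a} ≤ 1 := iSup_le fun a => prob_le_one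
  refine (Nat.floor_pos.2 ?_).ne'
  simpa using ENNReal.toReal_mono (ENNReal.inv_ne_top.2 hM0) (ENNReal.one_le_inv.2 hM1)

variable [MeasurableSingletonClass α]

theorem uniformOn_coe_finset (S : Finset α) :
    uniformOn (S : Set α) = (S.card : ℝ≥0∞)⁻¹ • Measure.count.restrict (S : Set α) := by
  rw [uniformOn, ProbabilityTheory.cond, Measure.count_apply_finset]

theorem toReal_uniformOn_coe_finset_singleton (S : Finset α) (a : α) :
    (uniformOn (S : Set α) {a}).toReal = (S : Set α).indicator 1 a / S.card := by
  classical
  rw [uniformOn_coe_finset, Measure.smul_apply,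
    Measure.restrict_apply (measurableSet_singleton a)]
  by_cases ha : a ∈ S
  · simp [ha, Set.singleton_inter_of_mem, div_eq_inv_mul]
  · simp [ha]

theorem exists_eq_sum_smul_uniformOn [Countable α] (μ : Measure α) [IsProbabilityMeasure μ]
    {F : Finset α} (hF : μ (↑F)ᶜ = 0) {k : ℕ} (hk : k ≠ 0) (hle : ∀ a, μ {a} ≤ (k : ℝ≥0∞)⁻¹) :
    ∃ w : Finset α → ℝ≥0∞, ∑ T ∈ F.powersetCard k, w T = 1 ∧
      μ = ∑ T ∈ F.powersetCard k, w T • uniformOn (T : Set α) := by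
  have hk' : (0 : ℝ) < k := by positivity
  set x : α → ℝ := fun a => k * (μ {a}).toReal
  have hx : x ∈ hypersimplex F k := by
    refine ⟨fun a => ⟨by positivity, ?_⟩, fun a ha => ?_, ?_⟩
    · have hμa := ENNReal.toReal_mono (by simpa using hk) (hle a)
      rw [ENNReal.toReal_inv, ENNReal.toReal_natCast] at hμa
      calc k * (μ {a}).toReal ≤ k * (k : ℝ)⁻¹ := by gcongr
        _ = 1 := mul_inv_cancel₀ hk'.ne'
    · simp [x, measure_mono_null (Set.singleton_subset_iff.2 ha) hF]
    · rw [← Finset.mul_sum, ← ENNReal.toReal_sum fun a _ => measure_ne_top μ {a},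
        sum_measure_singleton, (prob_compl_eq_zero_iff F.measurableSet).1 hF,
        ENNReal.toReal_one, mul_one]
  obtain ⟨w, hw0, hw1, hwx⟩ := hypersimplex.exists_sum_smul_indicator hx
  refine ⟨fun T => ENNReal.ofReal (w T), by rw [← ENNReal.ofReal_sum_of_nonneg hw0, hw1,
    ENNReal.ofReal_one], Measure.ext_iff_singleton.2 fun a => ?_⟩
  rw [Measure.coe_finsetSum, Finset.sum_apply]
  refine (ENNReal.toReal_eq_toReal_iff' (measure_ne_top _ _) ?_).1 ?_
  · exact ENNReal.sum_ne_top.2 fun T _ => by simp [ENNReal.mul_ne_top]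
  rw [ENNReal.toReal_sum fun T _ => by simp [ENNReal.mul_ne_top]]
  have hxa := congrFun hwx a
  simp only [Finset.sum_apply, Pi.smul_apply, smul_eq_mul, x] at hxa
  rw [← mul_div_cancel_left₀ (μ {a}).toReal hk'.ne', ← hxa, Finset.sum_div]
  refine Finset.sum_congr rfl fun T hT => ?_
  rw [Measure.smul_apply, smul_eq_mul, ENNReal.toReal_mul, ENNReal.toReal_ofReal (hw0 T hT),
    toReal_uniformOn_coe_finset_singleton, (Finset.mem_powersetCard.1 hT).2, mul_div_assoc]

end Atoms

theorem MeasureTheory.Measure.pi_eq_sum_smul_pi {ι : Type*} [Fintype ι] [DecidableEq ι] {β κ : ι → Type*}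
    [∀ i, MeasurableSpace (β i)] (μ : ∀ i, Measure (β i)) [∀ i, SigmaFinite (μ i)]
    (s : ∀ i, Finset (κ i)) (w : ∀ i, κ i → ℝ≥0∞) (ν : ∀ i, κ i → Measure (β i))
    [∀ i t, SigmaFinite (ν i t)] (hμ : ∀ i, μ i = ∑ t ∈ s i, w i t • ν i t) :
    Measure.pi μ = ∑ p ∈ Fintype.piFinset s, (∏ i, w i (p i)) • Measure.pi fun i => ν i (p i) := by
  refine Measure.pi_eq fun S _ => ?_
  simp only [Measure.coe_finsetSum, Finset.sum_apply, Measure.smul_apply, smul_eq_mul,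
    Measure.pi_pi, hμ, ← Finset.prod_mul_distrib]
  exact (Finset.prod_univ_sum s fun i t => w i t * ν i t (S i)).symm

theorem MeasureTheory.Measure.sum_smul_apply_le {β κ : Type*} [MeasurableSpace β] {s : Finset κ}
    {c : κ → ℝ≥0∞} (hc : ∑ p ∈ s, c p = 1) (ν : κ → Measure β) (A : Set β) {R : ℝ≥0∞}
    (h : ∀ p ∈ s, ν p A ≤ R) : (∑ p ∈ s, c p • ν p) A ≤ R :=
  calc (∑ p ∈ s, c p • ν p) A = ∑ p ∈ s, c p * ν p A := by
        simp only [Measure.coe_finsetSum, Finset.sum_apply, Measure.smul_apply, smul_eq_mul]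
    _ ≤ ∑ p ∈ s, c p * R := by gcongr with p hp; exact h p hp
    _ = R := by rw [← Finset.sum_mul, hc, one_mul]

/-- weak Rogozin inequality in a countable discrete group: the maximal point
mass of a product of independent finitely supported random variables is at most the supremum
of maximal point masses of products of uniforms on sets of cardinality `⌊1/M(Xᵢ)⌋`. -/
theorem stmt15 {G : Type*} [Group G] [Countable G] [MeasurableSpace G]
    [DiscreteMeasurableSpace G]
    (n : ℕ) (μ : Fin n → Measure G) (hprob : ∀ i, IsProbabilityMeasure (μ i))
    (hfin : ∀ i, ∃ F : Finset G, μ i (↑F)ᶜ = 0) :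
    (⨆ g : G, ((Measure.pi μ).map (fun x : Fin n → G => (List.ofFn x).prod)) {g})
      ≤ ⨆ (ν : Fin n → Measure G) (_ : ∀ i, ∃ S : Finset G,
            S.card = Nat.floor ((⨆ g : G, μ i {g})⁻¹.toReal) ∧
            ν i = (S.card : ℝ≥0∞)⁻¹ • Measure.count.restrict (↑S : Set G)),
          ⨆ g : G, ((Measure.pi ν).map (fun x : Fin n → G => (List.ofFn x).prod)) {g} := by
  choose F hF using hfin
  choose w hw hμ using fun i => exists_eq_sum_smul_uniformOn (μ i) (hF i)
    (natFloor_inv_iSup_measure_singleton_ne_zero (μ i)) (measure_singleton_le_inv_natFloor (μ i))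
  have hprod : Measurable fun x : Fin n → G => (List.ofFn x).prod := .of_discrete
  refine iSup_le fun g => ?_
  rw [Measure.map_apply hprod (measurableSet_singleton g), Measure.pi_eq_sum_smul_pi μ _ w _ hμ]
  refine Measure.sum_smul_apply_le
    (by rw [← Finset.prod_univ_sum, Finset.prod_eq_one fun i _ => hw i]) _ _ fun p hp => ?_
  rw [← Measure.map_apply hprod (measurableSet_singleton g)]
  refine le_iSup₂_of_le (fun i => uniformOn (p i : Set G))
    (fun i => ⟨p i, ?_, uniformOn_coe_finset _⟩) (le_iSup_of_le g le_rfl)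
  exact (Finset.mem_powersetCard.1 (Fintype.mem_piFinset.1 hp i)).2
end

section
/- Let d ≥ 1, n ≥ 2, θ = (θ_1, …, θ_n) a unit vector in ℝ^n, i ∈ {1, …, n}, and let P_i : ℝ^n → ℝ^n be the orthogonal projection onto e_i^⊥ (the hyperplane orthogonal to the i-th standard basis vector). Let m ∈ {1, …, n−1} and let M ⊆ ℝ^n be an m-dimensional linear subspace. If A is a Borel subset of (⟨θ⟩^⊥)^(d) ⊆ (ℝ^d)^n whose linear span equals M^(d) = M ⊗ ℝ^d, then |θ_i|^d · H^{md}(A) ≤ H^{md}(P_i^(d)(A)), where H^{md} denotes md-dimensional Hausdorff measure on (ℝ^d)^n. -/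
/-!
Let `W` be the span of `A`, of dimension `m d`, and `T` the restriction of `P_i^(d)` to `W`. The
Hausdorff measure of `T '' A` is that of `A` times the norm determinant of `T`, whose square is
`det (T* T) = det (1 - N* N)`, where `N : W → ℝ^d` reads off the `i`-th block `x_i`. Since every
column of `x ∈ W` is orthogonal to `θ`, `‖x_i‖² ≤ (1 - θ_i²) ‖x‖²`. By Sylvester's determinant
identity `det (1 - N* N) = det (1 - N N*)`, a determinant on `ℝ^d` of an operator bounded below by
`θ_i²`, hence at least `θ_i^{2d}`.
-/

open MeasureTheory Module
open scoped ENNReal RealInnerProductSpace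

theorem LinearMap.det_one_sub_comp_comm {R M N : Type*} [CommRing R] [AddCommGroup M] [Module R M]
    [Module.Free R M] [Module.Finite R M] [AddCommGroup N] [Module R N] [Module.Free R N]
    [Module.Finite R N] (f : M →ₗ[R] N) (g : N →ₗ[R] M) :
    LinearMap.det (1 - g ∘ₗ f) = LinearMap.det (1 - f ∘ₗ g) := by
  classical
  let b := Module.Free.chooseBasis R M
  let c := Module.Free.chooseBasis R N
  rw [← LinearMap.det_toMatrix b, ← LinearMap.det_toMatrix c, map_sub, map_sub,
    LinearMap.toMatrix_one, LinearMap.toMatrix_one, LinearMap.toMatrix_comp b c b,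
    LinearMap.toMatrix_comp c b c, Matrix.det_one_sub_mul_comm]

section InnerProductSpace

variable {U G : Type*} [NormedAddCommGroup U] [InnerProductSpace ℝ U] [FiniteDimensional ℝ U]
  [NormedAddCommGroup G] [InnerProductSpace ℝ G] [FiniteDimensional ℝ G]

theorem LinearMap.IsSymmetric.pow_finrank_le_det {T : U →ₗ[ℝ] U} (hT : T.IsSymmetric) {a : ℝ}
    (ha : 0 ≤ a) (h : ∀ v, a * ‖v‖ ^ 2 ≤ ⟪T v, v⟫) : a ^ finrank ℝ U ≤ T.det := by
  rw [hT.det_eq_prod_eigenvalues rfl, ← Fin.prod_const]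
  refine Finset.prod_le_prod (fun _ _ => ha) fun j _ => ?_
  have hv := hT.eigenvectorBasis rfl |>.orthonormal.1 j
  simpa [hT.apply_eigenvectorBasis, real_inner_smul_left, hv] using h (hT.eigenvectorBasis rfl j)

theorem LinearMap.norm_adjoint_apply_sq_le (N : U →ₗ[ℝ] G) {a : ℝ} (ha : 0 ≤ a)
    (hN : ∀ x, ‖N x‖ ^ 2 ≤ a * ‖x‖ ^ 2) (v : G) : ‖N.adjoint v‖ ^ 2 ≤ a * ‖v‖ ^ 2 := by
  set w := N.adjoint v
  have hw : ‖w‖ ^ 2 ≤ ‖N w‖ * ‖v‖ := by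
    rw [← real_inner_self_eq_norm_sq, LinearMap.adjoint_inner_left, real_inner_comm]
    exact real_inner_le_norm _ _
  have hw2 : (‖w‖ ^ 2) ^ 2 ≤ a * ‖w‖ ^ 2 * ‖v‖ ^ 2 :=
    calc (‖w‖ ^ 2) ^ 2 ≤ (‖N w‖ * ‖v‖) ^ 2 := pow_le_pow_left₀ (by positivity) hw 2
      _ = ‖N w‖ ^ 2 * ‖v‖ ^ 2 := mul_pow _ _ _
      _ ≤ a * ‖w‖ ^ 2 * ‖v‖ ^ 2 := by gcongr; exact hN w
  by_contra! hlt
  have hpos : 0 < ‖w‖ ^ 2 := lt_of_le_of_lt (by positivity) hlt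
  nlinarith [mul_lt_mul_of_pos_left hlt hpos]

theorem LinearMap.pow_finrank_le_normDet {V : Type*} [NormedAddCommGroup V] [InnerProductSpace ℝ V]
    [FiniteDimensional ℝ V] (T : U →ₗ[ℝ] V) (N : U →ₗ[ℝ] G) {c : ℝ} (hc : c ^ 2 ≤ 1)
    (hTN : ∀ x y, ⟪T x, T y⟫ = ⟪x, y⟫ - ⟪N x, N y⟫)
    (hN : ∀ x, ‖N x‖ ^ 2 ≤ (1 - c ^ 2) * ‖x‖ ^ 2) :
    |c| ^ finrank ℝ G ≤ T.normDet := by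
  have hgram : T.adjoint ∘ₗ T = 1 - N.adjoint ∘ₗ N := by
    refine LinearMap.ext fun x => ext_inner_right ℝ fun y => ?_
    simp [inner_sub_left, LinearMap.adjoint_inner_left, hTN]
  have hbound : ∀ v, c ^ 2 * ‖v‖ ^ 2 ≤ ⟪(1 - N ∘ₗ N.adjoint) v, v⟫ := by
    intro v
    have hadj := N.norm_adjoint_apply_sq_le (by linarith) hN v
    rw [LinearMap.sub_apply, Module.End.one_apply, LinearMap.comp_apply, inner_sub_left,
      ← LinearMap.adjoint_inner_right, real_inner_self_eq_norm_sq, real_inner_self_eq_norm_sq]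
    linarith
  have hsq : (|c| ^ finrank ℝ G) ^ 2 ≤ T.normDet ^ 2 := by
    have hdet : T.normDet ^ 2 = (T.adjoint ∘ₗ T).det := T.normDet_sq
    rw [← pow_mul, mul_comm, pow_mul, sq_abs, hdet, hgram, LinearMap.det_one_sub_comp_comm]
    exact (LinearMap.IsSymmetric.one.sub N.isSymmetric_self_comp_adjoint).pow_finrank_le_det
      (sq_nonneg c) hbound
  exact (pow_le_pow_iff_left₀ (by positivity) T.normDet_nonneg two_ne_zero).1 hsq

end InnerProductSpace

theorem LinearMap.hausdorffMeasure_image_of_subset {U V : Type*} [NormedAddCommGroup U]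
    [InnerProductSpace ℝ U] [MeasurableSpace U] [BorelSpace U] [NormedAddCommGroup V]
    [InnerProductSpace ℝ V] [MeasurableSpace V] [BorelSpace V] (f : U →ₗ[ℝ] V)
    (W : Submodule ℝ U) [FiniteDimensional ℝ W] {A : Set U} (hA : A ⊆ W) :
    μH[finrank ℝ W] (f '' A) = ENNReal.ofReal (f ∘ₗ W.subtype).normDet * μH[finrank ℝ W] A := by
  obtain ⟨B, rfl⟩ : ∃ B : Set W, W.subtype '' B = A :=
    ⟨W.subtype ⁻¹' A, Set.image_preimage_eq_of_subset (by simpa using hA)⟩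
  rw [← Set.image_comp, ← LinearMap.coe_comp, LinearMap.hausdorffMeasure_image,
    LinearMap.hausdorffMeasure_image, ← W.subtypeₗᵢ_toLinearMap, W.subtypeₗᵢ.normDet_eq_one,
    ENNReal.ofReal_one, one_mul]

theorem sq_inner_le_of_inner_eq_zero {E : Type*} [NormedAddCommGroup E] [InnerProductSpace ℝ E]
    {θ y : E} (hθ : ‖θ‖ = 1) (hy : ⟪θ, y⟫ = 0) (e : E) :
    ⟪e, y⟫ ^ 2 ≤ (‖e‖ ^ 2 - ⟪e, θ⟫ ^ 2) * ‖y‖ ^ 2 := by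
  have hproj : ⟪e, y⟫ = ⟪e - ⟪e, θ⟫ • θ, y⟫ := by
    rw [inner_sub_left, real_inner_smul_left, hy, mul_zero, sub_zero]
  have hnorm : ‖e - ⟪e, θ⟫ • θ‖ ^ 2 = ‖e‖ ^ 2 - ⟪e, θ⟫ ^ 2 := by
    rw [norm_sub_sq_real, real_inner_smul_right, norm_smul, Real.norm_eq_abs, hθ]
    ring_nf; rw [sq_abs]; ring
  rw [hproj, ← hnorm, ← mul_pow]
  exact sq_le_sq' (neg_le_of_abs_le (abs_real_inner_le_norm _ _)) (real_inner_le_norm _ _)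

namespace EuclideanSpace

variable {ι κ : Type*}

def col (l : κ) : EuclideanSpace ℝ (ι × κ) →ₗ[ℝ] EuclideanSpace ℝ ι where
  toFun x := WithLp.toLp 2 fun j => x (j, l)
  map_add' _ _ := rfl
  map_smul' _ _ := rfl

def row (i : ι) : EuclideanSpace ℝ (ι × κ) →ₗ[ℝ] EuclideanSpace ℝ κ where
  toFun x := WithLp.toLp 2 fun l => x (i, l)
  map_add' _ _ := rfl
  map_smul' _ _ := rfl

@[simp] theorem col_apply (l : κ) (x : EuclideanSpace ℝ (ι × κ)) (j : ι) : col l x j = x (j, l) :=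
  rfl

@[simp] theorem row_apply (i : ι) (x : EuclideanSpace ℝ (ι × κ)) (l : κ) : row i x l = x (i, l) :=
  rfl

def eraseRow [DecidableEq ι] (i : ι) : EuclideanSpace ℝ (ι × κ) →ₗ[ℝ] EuclideanSpace ℝ (ι × κ) where
  toFun x := WithLp.toLp 2 fun p => if p.1 = i then 0 else x p
  map_add' x y := by ext p; by_cases h : p.1 = i <;> simp [h]
  map_smul' r x := by ext p; by_cases h : p.1 = i <;> simp [h]

end EuclideanSpace

open EuclideanSpace

/-- The subspace `E^(d) = E ⊗ ℝ^κ` of `(ℝ^κ)^ι`. -/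
def Submodule.colwise {ι : Type*} (E : Submodule ℝ (EuclideanSpace ℝ ι)) (κ : Type*) :
    Submodule ℝ (EuclideanSpace ℝ (ι × κ)) where
  carrier := {x | ∀ l, col l x ∈ E}
  add_mem' hx hy l := E.add_mem (hx l) (hy l)
  zero_mem' _ := E.zero_mem
  smul_mem' r _ hx l := E.smul_mem r (hx l)

/-- The subspace `E^(d) = E ⊗ ℝ^κ` of `(ℝ^κ)^ι`. -/
def Submodule.colwiseEquiv {ι : Type*} (E : Submodule ℝ (EuclideanSpace ℝ ι)) (κ : Type*) :
    E.colwise κ ≃ₗ[ℝ] (κ → E) where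
  toFun x l := ⟨col l x, x.2 l⟩
  map_add' _ _ := rfl
  map_smul' _ _ := rfl
  invFun g := ⟨WithLp.toLp 2 fun p => (g p.2 : EuclideanSpace ℝ ι) p.1, fun l => (g l).2⟩
  left_inv _ := rfl
  right_inv _ := rfl

theorem Submodule.finrank_colwise {ι κ : Type*} [Fintype ι] [Fintype κ]
    (E : Submodule ℝ (EuclideanSpace ℝ ι)) :
    finrank ℝ (E.colwise κ) = Fintype.card κ * finrank ℝ E := by
  rw [(E.colwiseEquiv κ).finrank_eq, Module.finrank_pi_fintype, Finset.sum_const, Finset.card_univ,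
    smul_eq_mul]

namespace EuclideanSpace

variable {ι κ : Type*} [Fintype ι] [Fintype κ]

theorem inner_eraseRow [DecidableEq ι] (i : ι) (x y : EuclideanSpace ℝ (ι × κ)) :
    ⟪eraseRow i x, eraseRow i y⟫ = ⟪x, y⟫ - ⟪row i x, row i y⟫ := by
  have hprod (u v : EuclideanSpace ℝ (ι × κ)) (j : ι) (l : κ) :
      eraseRow i u (j, l) * eraseRow i v (j, l) = if j = i then 0 else u (j, l) * v (j, l) := by
    simp only [eraseRow, LinearMap.coe_mk, AddHom.coe_mk]; split_ifs <;> simp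
  simp only [PiLp.inner_apply, RCLike.inner_apply, conj_trivial, Fintype.sum_prod_type, hprod,
    row_apply, Finset.sum_ite_irrel, Finset.sum_const_zero]
  rw [Finset.sum_ite, Finset.sum_const_zero, zero_add, Finset.filter_ne',
    Finset.sum_erase_eq_sub (Finset.mem_univ i)]

theorem norm_sq_eq_sum_norm_col_sq (x : EuclideanSpace ℝ (ι × κ)) :
    ‖x‖ ^ 2 = ∑ l, ‖col l x‖ ^ 2 := by
  simp [EuclideanSpace.norm_sq_eq, Fintype.sum_prod_type, Finset.sum_comm (γ := κ)]

theorem norm_row_sq_le [DecidableEq ι] {θ : EuclideanSpace ℝ ι} (hθ : ‖θ‖ = 1) (i : ι)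
    {x : EuclideanSpace ℝ (ι × κ)} (hx : x ∈ (ℝ ∙ θ)ᗮ.colwise κ) :
    ‖row i x‖ ^ 2 ≤ (1 - θ i ^ 2) * ‖x‖ ^ 2 := by
  rw [norm_sq_eq_sum_norm_col_sq, Finset.mul_sum, EuclideanSpace.norm_sq_eq]
  refine Finset.sum_le_sum fun l _ => ?_
  simpa [EuclideanSpace.inner_single_left, PiLp.norm_single] using
    sq_inner_le_of_inner_eq_zero hθ (Submodule.mem_orthogonal_singleton_iff_inner_right.1 (hx l))
      (EuclideanSpace.single i 1)

end EuclideanSpace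

theorem stmt16_general (d n : ℕ)
    (θ : EuclideanSpace ℝ (Fin n)) (hθ : ‖θ‖ = 1) (i : Fin n)
    (m : ℕ)
    (M : Submodule ℝ (EuclideanSpace ℝ (Fin n))) (hM : Module.finrank ℝ M = m)
    (A : Set (EuclideanSpace ℝ (Fin n × Fin d)))
    (hAsub : ∀ x ∈ A, ∀ l : Fin d, ∑ j, θ j * x (j, l) = 0)
    (hspan : (Submodule.span ℝ A : Set (EuclideanSpace ℝ (Fin n × Fin d))) =
      {x | ∀ l : Fin d, (show EuclideanSpace ℝ (Fin n) from WithLp.toLp 2 (fun j => x (j, l))) ∈ M}) :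
    ENNReal.ofReal (|θ i| ^ d) * Measure.hausdorffMeasure ((m * d : ℕ) : ℝ) A
      ≤ Measure.hausdorffMeasure ((m * d : ℕ) : ℝ)
          ((fun x : EuclideanSpace ℝ (Fin n × Fin d) =>
            (show EuclideanSpace ℝ (Fin n × Fin d) from
              WithLp.toLp 2 (fun p => if p.1 = i then 0 else x p))) '' A) := by
  set W := Submodule.span ℝ A
  have hWM : W = M.colwise (Fin d) := SetLike.coe_injective hspan
  have hWθ : W ≤ (ℝ ∙ θ)ᗮ.colwise (Fin d) := Submodule.span_le.2 fun x hx l =>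
    Submodule.mem_orthogonal_singleton_iff_inner_right.2 <| by
      simpa [PiLp.inner_apply, mul_comm] using hAsub x hx l
  have hrank : finrank ℝ W = m * d := by
    rw [hWM, Submodule.finrank_colwise, hM, Fintype.card_fin, mul_comm]
  have hθi : θ i ^ 2 ≤ 1 := by
    simpa [hθ] using pow_le_pow_left₀ (norm_nonneg _) (PiLp.norm_apply_le θ i) 2
  have hdet : |θ i| ^ d ≤ (eraseRow i ∘ₗ W.subtype).normDet := by
    simpa using LinearMap.pow_finrank_le_normDet (eraseRow i ∘ₗ W.subtype) (row i ∘ₗ W.subtype)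
      hθi (fun x y => inner_eraseRow i (x : EuclideanSpace ℝ (Fin n × Fin d)) y)
      fun x => norm_row_sq_le hθ i (hWθ x.2)
  rw [← hrank]
  change _ ≤ μH[_] (eraseRow i '' A)
  rw [(eraseRow i).hausdorffMeasure_image_of_subset W Submodule.subset_span]
  gcongr

/-- comparison of Hausdorff measures of a set in `(⟨θ⟩^⊥)^{(d)}` spanning
`M^{(d)}` and of its coordinate projection `P_i^{(d)}`. -/
theorem stmt16 (d n : ℕ) (hd : 1 ≤ d) (hn : 2 ≤ n)
    (θ : EuclideanSpace ℝ (Fin n)) (hθ : ‖θ‖ = 1) (i : Fin n)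
    (m : ℕ) (hm1 : 1 ≤ m) (hmn : m < n)
    (M : Submodule ℝ (EuclideanSpace ℝ (Fin n))) (hM : Module.finrank ℝ M = m)
    (A : Set (EuclideanSpace ℝ (Fin n × Fin d))) (hA : MeasurableSet A)
    (hAsub : ∀ x ∈ A, ∀ l : Fin d, ∑ j, θ j * x (j, l) = 0)
    (hspan : (Submodule.span ℝ A : Set (EuclideanSpace ℝ (Fin n × Fin d))) =
      {x | ∀ l : Fin d, (show EuclideanSpace ℝ (Fin n) from WithLp.toLp 2 (fun j => x (j, l))) ∈ M}) :
    ENNReal.ofReal (|θ i| ^ d) * Measure.hausdorffMeasure ((m * d : ℕ) : ℝ) A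
      ≤ Measure.hausdorffMeasure ((m * d : ℕ) : ℝ)
          ((fun x : EuclideanSpace ℝ (Fin n × Fin d) =>
            (show EuclideanSpace ℝ (Fin n × Fin d) from
              WithLp.toLp 2 (fun p => if p.1 = i then 0 else x p))) '' A) :=
  stmt16_general d n θ hθ i m M hM A hAsub hspan
end
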